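/- arXiv:math/0303124 — 4 statements merged into one kernel-verified Lean document; each statement's English description precedes it below -/
import Mathlib

section
/- Let N ≥ 2. In B_sp^+ with the type-D_N Kashiwara operators, the constant sequence (+,…,+) is the unique element b with f̃_l b = 0 for all 1 ≤ l ≤ N, and every element of B_sp^+ is of the form ẽ_{l_1} ẽ_{l_2} ⋯ ẽ_{l_p}(+,…,+) for some p ≥ 0 and l_1,…,l_p ∈ {1,…,N}. -/
namespace CrystalPaper

/-- A sign sequence of length `N`: `true` codes `+`, `false` codes `−`. -/
abbrev Seq (N : ℕ) := Fin N → Bool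

/-- The constant sequence `(+,…,+)`. -/
def top (N : ℕ) : Seq N := fun _ => true

/-- The constant sequence `(−,…,−)`. -/
def bot (N : ℕ) : Seq N := fun _ => false

/-- The sequence `(+^k, −^{N−k})` (first `k` entries `+`, the rest `−`). -/
def lowSeq (N k : ℕ) : Seq N := fun i => decide ((i : ℕ) < k)

/-- The number of `−` entries of a sign sequence. -/
def minusCount (N : ℕ) (b : Seq N) : ℕ :=
  (Finset.univ.filter (fun i => b i = false)).card

/-- `B_sp^+`: sign sequences with an even number of `−` entries. -/
def BspPlus (N : ℕ) (b : Seq N) : Prop := Even (minusCount N b)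

/-- `B_sp^−`: sign sequences with an odd number of `−` entries. -/
def BspMinus (N : ℕ) (b : Seq N) : Prop := Odd (minusCount N b)

/-- The type-`D_N` Kashiwara raising operator `ẽ_l`, labels `1 ≤ l ≤ N`
(`none` codes `0`).  For `1 ≤ l ≤ N−1` it replaces `(b_l, b_{l+1}) = (+,−)` by `(−,+)`;
`ẽ_N` replaces `(b_{N−1}, b_N) = (+,+)` by `(−,−)`. -/
def eD (N l : ℕ) (b : Seq N) : Option (Seq N) :=
  if h : 1 ≤ l ∧ l + 1 ≤ N then
    let i : Fin N := ⟨l - 1, by omega⟩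
    let j : Fin N := ⟨l, by omega⟩
    if b i = true ∧ b j = false then
      some (Function.update (Function.update b i false) j true)
    else none
  else if h2 : l = N ∧ 2 ≤ N then
    let i : Fin N := ⟨N - 2, by omega⟩
    let j : Fin N := ⟨N - 1, by omega⟩
    if b i = true ∧ b j = true then
      some (Function.update (Function.update b i false) j false)
    else none
  else none

/-- The type-`D_N` Kashiwara lowering operator `f̃_l`, labels `1 ≤ l ≤ N`.
For `1 ≤ l ≤ N−1` it replaces `(b_l, b_{l+1}) = (−,+)` by `(+,−)`;
`f̃_N` replaces `(b_{N−1}, b_N) = (−,−)` by `(+,+)`. -/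
def fD (N l : ℕ) (b : Seq N) : Option (Seq N) :=
  if h : 1 ≤ l ∧ l + 1 ≤ N then
    let i : Fin N := ⟨l - 1, by omega⟩
    let j : Fin N := ⟨l, by omega⟩
    if b i = false ∧ b j = true then
      some (Function.update (Function.update b i true) j false)
    else none
  else if h2 : l = N ∧ 2 ≤ N then
    let i : Fin N := ⟨N - 2, by omega⟩
    let j : Fin N := ⟨N - 1, by omega⟩
    if b i = false ∧ b j = false then
      some (Function.update (Function.update b i true) j true)
    else none
  else none

-- auxiliary
lemma minusCount_eq (N : ℕ) (b : Seq N) :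
    minusCount N b = ∑ k : Fin N, (if b k = false then 1 else 0) := by
  rw [minusCount, Finset.card_filter]

def meas (N : ℕ) (b : Seq N) : ℕ :=
  ∑ k : Fin N, (if b k = false then N - (k : ℕ) else 0)

lemma sum_update2 {N : ℕ} (F : Fin N → Bool → ℕ) (b : Seq N) (i j : Fin N)
    (hij : i ≠ j) (x y : Bool) :
    (∑ k : Fin N, F k (Function.update (Function.update b i x) j y k)) + (F i (b i) + F j (b j))
      = (∑ k : Fin N, F k (b k)) + (F i x + F j y) := by
  have hmem : j ∈ Finset.univ.erase i := Finset.mem_erase.mpr ⟨hij.symm, Finset.mem_univ j⟩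
  have key : ∀ g : Fin N → Bool,
      (∑ k : Fin N, F k (g k))
        = F i (g i) + (F j (g j) + ∑ k ∈ (Finset.univ.erase i).erase j, F k (g k)) := by
    intro g
    rw [← Finset.add_sum_erase _ _ (Finset.mem_univ i), ← Finset.add_sum_erase _ _ hmem]
  have hci : Function.update (Function.update b i x) j y i = x := by
    simp [Function.update_apply, hij]
  have hcj : Function.update (Function.update b i x) j y j = y := by simp
  have hrest : ∑ k ∈ (Finset.univ.erase i).erase j,
      F k (Function.update (Function.update b i x) j y k)
      = ∑ k ∈ (Finset.univ.erase i).erase j, F k (b k) := by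
    refine Finset.sum_congr rfl fun k hk => ?_
    rcases Finset.mem_erase.mp hk with ⟨hkj, hk'⟩
    rcases Finset.mem_erase.mp hk' with ⟨hki, _⟩
    simp [Function.update_apply, hki, hkj]
  rw [key, key, hci, hcj, hrest]
  ring

lemma fD_top (N l : ℕ) : fD N l (top N) = none := by
  unfold fD
  split
  · simp [top]
  · split
    · simp [top]
    · rfl

lemma fD_apply_lt (N l : ℕ) (h1 : 1 ≤ l) (h2 : l + 1 ≤ N) (b : Seq N)
    (hi : b ⟨l - 1, by omega⟩ = false) (hj : b ⟨l, by omega⟩ = true) :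
    fD N l b = some (Function.update (Function.update b ⟨l - 1, by omega⟩ true)
      ⟨l, by omega⟩ false) := by
  unfold fD
  rw [dif_pos ⟨h1, h2⟩]
  rw [if_pos ⟨hi, hj⟩]

lemma fD_apply_N (N : ℕ) (hN : 2 ≤ N) (b : Seq N)
    (hi : b ⟨N - 2, by omega⟩ = false) (hj : b ⟨N - 1, by omega⟩ = false) :
    fD N N b = some (Function.update (Function.update b ⟨N - 2, by omega⟩ true)
      ⟨N - 1, by omega⟩ true) := by
  unfold fD
  rw [dif_neg (by omega : ¬(1 ≤ N ∧ N + 1 ≤ N)), dif_pos ⟨rfl, hN⟩]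
  rw [if_pos ⟨hi, hj⟩]

lemma fD_step {N l : ℕ} {b y : Seq N} (h : fD N l b = some y) :
    eD N l y = some b ∧ minusCount N b % 2 = minusCount N y % 2 ∧ meas N y < meas N b := by
  unfold fD at h
  split at h
  case isTrue hl =>
    obtain ⟨h1, h2⟩ := hl
    dsimp only at h
    split at h
    case isTrue hc =>
      obtain ⟨hbi, hbj⟩ := hc
      have hy : y = Function.update (Function.update b ⟨l - 1, by omega⟩ true)
          ⟨l, by omega⟩ false := (Option.some.inj h).symm
      set i : Fin N := ⟨l - 1, by omega⟩ with hidef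
      set j : Fin N := ⟨l, by omega⟩ with hjdef
      have hij : i ≠ j := by simp only [ne_eq, hidef, hjdef, Fin.mk.injEq]; omega
      have hyi : y i = true := by rw [hy]; simp [Function.update_apply, hij]
      have hyj : y j = false := by rw [hy]; simp [Function.update_apply]
      have hback : Function.update (Function.update y i false) j true = b := by
        funext k
        by_cases hk1 : k = j
        · subst hk1; simp [Function.update_apply, hbj]
        · by_cases hk2 : k = i
          · subst hk2; simp [Function.update_apply, hij, hbi, hk1]
          · simp [Function.update_apply, hk1, hk2, hy]
      refine ⟨?_, ?_, ?_⟩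
      · unfold eD
        rw [dif_pos ⟨h1, h2⟩, if_pos ⟨hyi, hyj⟩, hback]
      · have key := sum_update2 (fun _ c => if c = false then 1 else 0) b i j hij true false
        rw [← hy, hbi, hbj] at key
        have key2 : minusCount N y + (1 + 0) = minusCount N b + (0 + 1) := by
          rw [minusCount_eq, minusCount_eq]; exact key
        omega
      · have key := sum_update2 (fun k c => if c = false then N - (k : ℕ) else 0) b i j hij
          true false
        rw [← hy, hbi, hbj] at key
        have key2 : meas N y + ((N - (l - 1)) + 0) = meas N b + (0 + (N - l)) := key
        omega
    case isFalse => simp at h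
  case isFalse hl =>
    split at h
    case isTrue hl2 =>
      obtain ⟨hlN, hN⟩ := hl2
      dsimp only at h
      split at h
      case isTrue hc =>
        obtain ⟨hbi, hbj⟩ := hc
        have hy : y = Function.update (Function.update b ⟨N - 2, by omega⟩ true)
            ⟨N - 1, by omega⟩ true := (Option.some.inj h).symm
        set i : Fin N := ⟨N - 2, by omega⟩ with hidef
        set j : Fin N := ⟨N - 1, by omega⟩ with hjdef
        have hij : i ≠ j := by simp only [ne_eq, hidef, hjdef, Fin.mk.injEq]; omega
        have hyi : y i = true := by rw [hy]; simp [Function.update_apply, hij]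
        have hyj : y j = true := by rw [hy]; simp [Function.update_apply]
        have hback : Function.update (Function.update y i false) j false = b := by
          funext k
          by_cases hk1 : k = j
          · subst hk1; simp [Function.update_apply, hbj]
          · by_cases hk2 : k = i
            · subst hk2; simp [Function.update_apply, hij, hbi, hk1]
            · simp [Function.update_apply, hk1, hk2, hy]
        refine ⟨?_, ?_, ?_⟩
        · unfold eD
          rw [dif_neg hl, dif_pos ⟨hlN, hN⟩, if_pos ⟨hyi, hyj⟩, hback]
        · have key := sum_update2 (fun _ c => if c = false then 1 else 0) b i j hij true true
          rw [← hy, hbi, hbj] at key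
          have key2 : minusCount N y + (1 + 1) = minusCount N b + (0 + 0) := by
            rw [minusCount_eq, minusCount_eq]; exact key
          omega
        · have key := sum_update2 (fun k c => if c = false then N - (k : ℕ) else 0) b i j hij
            true true
          rw [← hy, hbi, hbj] at key
          have key2 : meas N y + ((N - (N - 2)) + (N - (N - 1))) = meas N b + (0 + 0) := key
          omega
      case isFalse => simp at h
    case isFalse => simp at h

lemma ne_top_exists_false {N : ℕ} (b : Seq N) (h : b ≠ top N) : ∃ i, b i = false := by
  by_contra hc
  push_neg at hc
  exact h (funext fun i => by simpa [top] using hc i)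

lemma chain {N : ℕ} (b : Seq N)
    (hch : ∀ i : Fin N, ∀ h : (i : ℕ) + 1 < N, b i = false → b ⟨(i : ℕ) + 1, h⟩ = false)
    (k : ℕ) (hk : k < N) (hbk : b ⟨k, hk⟩ = false) :
    ∀ m, k ≤ m → ∀ hm : m < N, b ⟨m, hm⟩ = false := by
  intro m hkm
  induction m, hkm using Nat.le_induction with
  | base => intro hm; exact hbk
  | succ m hkm ih =>
    intro hm
    exact hch ⟨m, by omega⟩ hm (ih (by omega))

lemma exists_f {N : ℕ} (hN : 2 ≤ N) (b : Seq N) (hb : BspPlus N b) (hne : b ≠ top N) :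
    ∃ l y, 1 ≤ l ∧ l ≤ N ∧ fD N l b = some y := by
  by_cases hA : ∃ i : Fin N, ∃ h : (i : ℕ) + 1 < N, b i = false ∧ b ⟨(i : ℕ) + 1, h⟩ = true
  · obtain ⟨i, h, hf, ht⟩ := hA
    exact ⟨(i : ℕ) + 1, _, by omega, by omega,
      fD_apply_lt N ((i : ℕ) + 1) (by omega) (by omega) b hf ht⟩
  · push_neg at hA
    have hch : ∀ i : Fin N, ∀ h : (i : ℕ) + 1 < N, b i = false → b ⟨(i : ℕ) + 1, h⟩ = false := by
      intro i h hf
      have := hA i h hf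
      revert this
      cases b ⟨(i : ℕ) + 1, h⟩ <;> simp
    obtain ⟨i0, hb0⟩ := ne_top_exists_false b hne
    have hlast : b ⟨N - 1, by omega⟩ = false :=
      chain b hch (i0 : ℕ) i0.isLt hb0 (N - 1) (by omega) (by omega)
    by_cases h2 : b ⟨N - 2, by omega⟩ = false
    · exact ⟨N, _, by omega, le_rfl, fD_apply_N N hN b h2 hlast⟩
    · exfalso
      have hall : ∀ i : Fin N, (i : ℕ) < N - 1 → b i = true := by
        intro i hi
        by_contra hfi
        have hfi' : b i = false := by revert hfi; cases b i <;> simp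
        exact h2 (chain b hch (i : ℕ) i.isLt hfi' (N - 2) (by omega) (by omega))
      have hfilter : Finset.univ.filter (fun i => b i = false)
          = {(⟨N - 1, by omega⟩ : Fin N)} := by
        ext i
        simp only [Finset.mem_filter, Finset.mem_univ, true_and, Finset.mem_singleton]
        constructor
        · intro hfi
          by_contra hne'
          have hlt : (i : ℕ) < N - 1 := by
            have h1 := i.isLt
            have hv : (i : ℕ) ≠ N - 1 := fun hcv => hne' (Fin.ext hcv)
            omega
          have := hall i hlt
          simp [this] at hfi
        · intro h; subst h; exact hlast
      have h1 : minusCount N b = 1 := by rw [minusCount, hfilter]; simp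
      rw [BspPlus, h1] at hb
      simpa using hb

lemma reach {N : ℕ} (hN : 2 ≤ N) : ∀ n, ∀ b : Seq N, BspPlus N b → meas N b ≤ n →
    Relation.ReflTransGen (fun x y => ∃ l, 1 ≤ l ∧ l ≤ N ∧ eD N l x = some y) (top N) b := by
  intro n
  induction n with
  | zero =>
    intro b hb hm
    have hbt : b = top N := by
      funext k
      by_contra hk
      have hk' : b k = false := by revert hk; cases b k <;> simp [top]
      have hle : (if b k = false then N - (k : ℕ) else 0) ≤ meas N b :=
        Finset.single_le_sum (f := fun k : Fin N => if b k = false then N - (k : ℕ) else 0)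
          (fun _ _ => Nat.zero_le _) (Finset.mem_univ k)
      rw [hk'] at hle
      simp only [if_true] at hle
      have := k.isLt
      omega
    subst hbt
    exact Relation.ReflTransGen.refl
  | succ n ih =>
    intro b hb hm
    by_cases hne : b = top N
    · subst hne; exact Relation.ReflTransGen.refl
    · obtain ⟨l, y, h1, h2, hf⟩ := exists_f hN b hb hne
      obtain ⟨he, hpar, hlt⟩ := fD_step hf
      have hby : BspPlus N y := by
        rw [BspPlus, Nat.even_iff] at hb ⊢
        omega
      exact (ih y hby (by omega)).tail ⟨l, h1, h2, he⟩

/-- In `B_sp^+` with the type-`D_N` Kashiwara operators (`N ≥ 2`),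
`(+,…,+)` is the unique element killed by all `f̃_l`, `1 ≤ l ≤ N`, and every element
of `B_sp^+` is obtained from `(+,…,+)` by applying operators `ẽ_{l}`, `1 ≤ l ≤ N`. -/
theorem BspPlus_lowest_unique_and_connected (N : ℕ) (hN : 2 ≤ N) :
    (∀ b : Seq N, BspPlus N b →
      ((∀ l, 1 ≤ l → l ≤ N → fD N l b = none) ↔ b = top N)) ∧
    (∀ b : Seq N, BspPlus N b →
      Relation.ReflTransGen
        (fun x y => ∃ l, 1 ≤ l ∧ l ≤ N ∧ eD N l x = some y) (top N) b) := by

  constructor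
  · intro b hb
    constructor
    · intro hkill
      by_contra hne
      obtain ⟨l, y, h1, h2, hf⟩ := exists_f hN b hb hne
      rw [hkill l h1 h2] at hf
      exact Option.some_ne_none y hf.symm
    · intro h; subst h; exact fun l _ _ => fD_top N l
  · intro b hb
    exact reach hN (meas N b) b hb le_rfl


end CrystalPaper
end

section
/- Let N ≥ 2. In B_sp^− with the type-D_N Kashiwara operators, the sequence (+,…,+,−) (all entries + except the last, which is −) is the unique element b with f̃_l b = 0 for all 1 ≤ l ≤ N, and every element of B_sp^− is of the form ẽ_{l_1} ẽ_{l_2} ⋯ ẽ_{l_p}(+,…,+,−) for some p ≥ 0 and l_1,…,l_p ∈ {1,…,N}. -/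
namespace CrystalPaper

/-!
Every `f̃_l` either moves a `−` one place to the right or deletes the pair `(−,−)` at the end,
so it strictly lowers `∑ (N - k)` over the positions `k` of the `−` entries, keeps the parity of
their number, and is undone by `ẽ_l`. An element on which no `f̃_l` acts has no `(−,+)`, so it
is `(+,…,+,−,…,−)`; an odd number of `−` puts one at the end, and `f̃_N b = 0` then leaves only
`(+,…,+,−)`. Descending by `f̃`-steps from any element of `B_sp^−` must therefore end there,
and reversing the descent gives the `ẽ`-path.
-/

open Finset Function

theorem sum_comp_update_add {ι β M : Type*} [Fintype ι] [DecidableEq ι] [AddCommMonoid M]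
    (F : ι → β → M) (b : ι → β) (i : ι) (x : β) :
    ∑ k, F k (update b i x k) + F i (b i) = ∑ k, F k (b k) + F i x := by
  rw [← add_sum_erase _ _ (mem_univ i), ← add_sum_erase _ (fun k => F k (b k)) (mem_univ i),
    update_self, sum_congr rfl fun k hk => by rw [update_of_ne (ne_of_mem_erase hk)]]
  abel

theorem sum_comp_update_update_add {ι β M : Type*} [Fintype ι] [DecidableEq ι]
    [AddCommMonoid M] (F : ι → β → M) (b : ι → β) {i j : ι} (hij : i ≠ j) (x y : β) :
    ∑ k, F k (update (update b i x) j y k) + (F i (b i) + F j (b j)) =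
      ∑ k, F k (b k) + (F i x + F j y) := by
  have hj := sum_comp_update_add F (update b i x) j y
  rw [update_of_ne hij.symm] at hj
  rw [add_comm (F i _), ← add_assoc, hj, add_right_comm, sum_comp_update_add, add_assoc]

theorem update_update_update_update_self {ι β : Type*} [DecidableEq ι] (b : ι → β) {i j : ι}
    (hij : i ≠ j) (x y : β) :
    update (update (update (update b i x) j y) i (b i)) j (b j) = b := by
  rw [update_comm hij.symm, update_idem, update_idem, update_eq_self, update_eq_self]

theorem reflTransGen_of_wellFounded_descent {α : Type*} {P : α → Prop} {f e : α → α → Prop}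
    {x₀ : α} (hwf : WellFounded (flip f)) (hP : ∀ x y, f x y → P x → P y)
    (hinv : ∀ x y, f x y → e y x) (hmin : ∀ x, P x → (∀ y, ¬ f x y) → x = x₀) :
    ∀ x, P x → Relation.ReflTransGen e x₀ x := by
  intro x
  induction x using hwf.induction with
  | _ x ih =>
    intro hx
    by_cases hstep : ∃ y, f x y
    · obtain ⟨y, hxy⟩ := hstep
      exact (ih y hxy (hP x y hxy hx)).tail (hinv x y hxy)
    · simp only [not_exists] at hstep
      rw [hmin x hx hstep]

variable {N : ℕ}

theorem fD_succ_eq_none_iff {b : Seq N} {i : ℕ} (h : i + 1 < N) :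
    fD N (i + 1) b = none ↔ (b ⟨i, by omega⟩ = false → b ⟨i + 1, h⟩ = false) := by
  rw [fD, dif_pos ⟨by omega, h⟩]
  simp

theorem fD_self_eq_none_iff {b : Seq N} (hN : 2 ≤ N) :
    fD N N b = none ↔ (b ⟨N - 2, by omega⟩ = false → b ⟨N - 1, by omega⟩ = true) := by
  rw [fD, dif_neg (by omega), dif_pos ⟨rfl, hN⟩]
  simp

-- In `Bool`, `false < true`: antitone sequences are those of the form `(+,…,+,−,…,−)`.
theorem antitone_of_fD_eq_none {b : Seq N} (h : ∀ i, i + 1 < N → fD N (i + 1) b = none) :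
    Antitone b := by
  cases N with
  | zero => exact fun i => i.elim0
  | succ n =>
    refine Fin.antitone_iff_succ_le.2 fun i => ?_
    have hi := (fD_succ_eq_none_iff (by omega)).1 (h i (by omega))
    change b i.castSucc = false → b i.succ = false at hi
    revert hi
    cases b i.castSucc <;> cases b i.succ <;> decide

theorem eq_lowSeq_of_fD_eq_none {b : Seq N} (hN : 2 ≤ N) (hb : BspMinus N b)
    (hf : ∀ l, 1 ≤ l → l ≤ N → fD N l b = none) : b = lowSeq N (N - 1) := by
  have hanti : Antitone b := antitone_of_fD_eq_none fun i _ => hf (i + 1) (by omega) (by omega)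
  obtain ⟨m, hm⟩ := Finset.card_pos.1 hb.pos
  have hlast : b ⟨N - 1, by omega⟩ = false := Bool.eq_false_of_le_false <|
    (mem_filter.1 hm).2 ▸ hanti (Fin.mk_le_mk.2 (by omega) : m ≤ ⟨N - 1, by omega⟩)
  have hpen : b ⟨N - 2, by omega⟩ = true := by
    simpa [hlast] using (fD_self_eq_none_iff hN).1 (hf N (by omega) le_rfl)
  funext k
  by_cases hk : (k : ℕ) < N - 1
  · have hle := hanti (Fin.mk_le_mk.2 (by omega) : k ≤ ⟨N - 2, by omega⟩)
    rw [hpen] at hle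
    simpa [lowSeq, hk] using top_le_iff.1 hle
  · have : k = ⟨N - 1, by omega⟩ := Fin.ext (show (k : ℕ) = N - 1 by omega)
    simp [lowSeq, this, hlast]

theorem fD_lowSeq_eq_none (hN : 2 ≤ N) {l : ℕ} (hl : 1 ≤ l) (hlN : l ≤ N) :
    fD N l (lowSeq N (N - 1)) = none := by
  rcases hlN.lt_or_eq with hlt | rfl
  · obtain ⟨i, rfl⟩ : ∃ i, l = i + 1 := ⟨l - 1, by omega⟩
    rw [fD_succ_eq_none_iff hlt]
    simp [lowSeq]
    omega
  · rw [fD_self_eq_none_iff hN]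
    simp [lowSeq]
    omega

theorem exists_update_of_fD_eq_some {l : ℕ} {b b' : Seq N} (h : fD N l b = some b') :
    ∃ i j : Fin N, i < j ∧ b i = false ∧ b' = update (update b i true) j (!b j) := by
  unfold fD at h
  dsimp only at h
  split_ifs at h with hl hb hN hb <;> cases h
  · exact ⟨⟨l - 1, by omega⟩, ⟨l, by omega⟩, Fin.mk_lt_mk.2 (by omega), hb.1, by rw [hb.2]; rfl⟩
  · exact ⟨⟨N - 2, by omega⟩, ⟨N - 1, by omega⟩, Fin.mk_lt_mk.2 (by omega), hb.1,
      by rw [hb.2]; rfl⟩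

theorem eD_eq_some_of_fD_eq_some {l : ℕ} {b b' : Seq N} (h : fD N l b = some b') :
    eD N l b' = some b := by
  unfold fD at h
  dsimp only at h
  split_ifs at h with hl hb hN hb <;> cases h
  · have hij : (⟨l - 1, by omega⟩ : Fin N) ≠ ⟨l, by omega⟩ := Fin.ne_of_val_ne (by dsimp; omega)
    have hrestore := update_update_update_update_self b hij true false
    rw [hb.1, hb.2] at hrestore
    rw [eD, dif_pos hl]
    dsimp only
    rw [if_pos ⟨by rw [update_of_ne hij, update_self], update_self ..⟩, hrestore]
  · have hij : (⟨N - 2, by omega⟩ : Fin N) ≠ ⟨N - 1, by omega⟩ :=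
      Fin.ne_of_val_ne (by dsimp; omega)
    have hrestore := update_update_update_update_self b hij true true
    rw [hb.1, hb.2] at hrestore
    rw [eD, dif_neg hl, dif_pos hN]
    dsimp only
    rw [if_pos ⟨by rw [update_of_ne hij, update_self], update_self ..⟩, hrestore]

theorem minusCount_eq_sum (b : Seq N) :
    minusCount N b = ∑ k, if b k = false then 1 else 0 :=
  card_filter _ _

theorem minusCount_update_update_mod_two {b : Seq N} {i j : Fin N} (hij : i ≠ j)
    (hi : b i = false) :
    minusCount N (update (update b i true) j (!b j)) % 2 = minusCount N b % 2 := by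
  have h := sum_comp_update_update_add (fun _ v => if v = false then 1 else 0) b hij true (!b j)
  rw [← minusCount_eq_sum, ← minusCount_eq_sum] at h
  cases hj : b j <;> simp [hi, hj] at h ⊢ <;> omega

def minusWeight (N : ℕ) (b : Seq N) : ℕ := ∑ k, if b k = false then N - k else 0

theorem minusWeight_update_update_lt {b : Seq N} {i j : Fin N} (hij : i < j)
    (hi : b i = false) :
    minusWeight N (update (update b i true) j (!b j)) < minusWeight N b := by
  have h := sum_comp_update_update_add (fun (k : Fin N) v => if v = false then N - k else 0) b
    hij.ne true (!b j)
  have hjN := j.isLt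
  have hij' : (i : ℕ) < j := hij
  unfold minusWeight
  cases hj : b j <;> simp [hi, hj] at h ⊢ <;> omega

theorem bspMinus_of_fD_eq_some {l : ℕ} {b b' : Seq N} (h : fD N l b = some b')
    (hb : BspMinus N b) : BspMinus N b' := by
  obtain ⟨i, j, hij, hi, rfl⟩ := exists_update_of_fD_eq_some h
  rw [BspMinus, Nat.odd_iff] at hb ⊢
  rwa [minusCount_update_update_mod_two hij.ne hi]

theorem minusWeight_lt_of_fD_eq_some {l : ℕ} {b b' : Seq N} (h : fD N l b = some b') :
    minusWeight N b' < minusWeight N b := by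
  obtain ⟨i, j, hij, hi, rfl⟩ := exists_update_of_fD_eq_some h
  exact minusWeight_update_update_lt hij hi

/-- In `B_sp^−` with the type-`D_N` Kashiwara operators (`N ≥ 2`),
`(+,…,+,−)` is the unique element killed by all `f̃_l`, `1 ≤ l ≤ N`, and every element
of `B_sp^−` is obtained from `(+,…,+,−)` by applying operators `ẽ_l`, `1 ≤ l ≤ N`. -/
theorem BspMinus_lowest_unique_and_connected (N : ℕ) (hN : 2 ≤ N) :
    (∀ b : Seq N, BspMinus N b →
      ((∀ l, 1 ≤ l → l ≤ N → fD N l b = none) ↔ b = lowSeq N (N - 1))) ∧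
    (∀ b : Seq N, BspMinus N b →
      Relation.ReflTransGen
        (fun x y => ∃ l, 1 ≤ l ∧ l ≤ N ∧ eD N l x = some y) (lowSeq N (N - 1)) b) := by
  refine ⟨fun b hb => ⟨eq_lowSeq_of_fD_eq_none hN hb, ?_⟩, ?_⟩
  · rintro rfl l hl hlN
    exact fD_lowSeq_eq_none hN hl hlN
  refine reflTransGen_of_wellFounded_descent
    (f := fun x y => ∃ l, 1 ≤ l ∧ l ≤ N ∧ fD N l x = some y) ?_ ?_ ?_ ?_
  · exact Subrelation.wf (fun ⟨_, _, _, h⟩ => minusWeight_lt_of_fD_eq_some h)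
      (measure (minusWeight N)).wf
  · rintro x y ⟨l, -, -, h⟩
    exact bspMinus_of_fD_eq_some h
  · rintro x y ⟨l, hl, hlN, h⟩
    exact ⟨l, hl, hlN, eD_eq_some_of_fD_eq_some h⟩
  · intro x hx hlowest
    refine eq_lowSeq_of_fD_eq_none hN hx fun l hl hlN => ?_
    exact Option.eq_none_iff_forall_ne_some.2 fun y h => hlowest y ⟨l, hl, hlN, h⟩

end CrystalPaper
end

section
/- Let N ≥ 2. Every b ∈ B_sp^+ with first entry b_1 = + is of the form ẽ_{l_1} ẽ_{l_2} ⋯ ẽ_{l_p}(+,…,+) for some p ≥ 0 and l_1,…,l_p ∈ {2,…,N} (i.e., b is reachable from the constant sequence (+,…,+) using only the operators ẽ_l with l ≥ 2). -/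
theorem Relation.ReflTransGen.of_forall_exists_pred {α : Type*} {r : α → α → Prop}
    {P : α → Prop} (μ : α → ℕ) {a : α}
    (hpred : ∀ b, P b → b ≠ a → ∃ c, P c ∧ μ c < μ b ∧ r c b) {b : α} (hb : P b) :
    Relation.ReflTransGen r a b := by
  induction hμ : μ b using Nat.strong_induction_on generalizing b with
  | _ n ih =>
    obtain rfl | hne := eq_or_ne b a
    · exact .refl
    obtain ⟨c, hc, hlt, hcb⟩ := hpred b hb hne
    exact (ih (μ c) (hμ ▸ hlt) hc rfl).tail hcb

theorem Finset.sum_add_pair_eq_of_eqOn_compl {ι M : Type*} [Fintype ι] [DecidableEq ι]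
    [AddCommMonoid M] {f g : ι → M} {i j : ι} (hij : i ≠ j)
    (h : Set.EqOn f g ({i, j} : Set ι)ᶜ) :
    ∑ k, f k + (g i + g j) = ∑ k, g k + (f i + f j) := by
  have hsub : ({i, j} : Finset ι) ⊆ Finset.univ := Finset.subset_univ _
  rw [← Finset.sum_sdiff hsub, ← Finset.sum_sdiff (f := g) hsub, Finset.sum_pair hij,
    Finset.sum_pair hij, Finset.sum_congr rfl fun k hk => h (by simpa using hk)]
  abel

open Function

theorem Function.update_update_update_update_eq_self {α β : Type*} [DecidableEq α]
    {f : α → β} {i j : α} (hij : i ≠ j) {x y x' y' : β} (hi : f i = x') (hj : f j = y') :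
    update (update (update (update f i x) j y) i x') j y' = f := by
  ext k
  by_cases hkj : k = j
  · simp [hkj, hj]
  · by_cases hki : k = i <;> simp [hki, hkj, hij, hi]

namespace CrystalPaper

variable {N : ℕ}

def minusSum (w : Fin N → ℕ) (b : Seq N) : ℕ := ∑ k, if b k then 0 else w k

theorem minusCount_eq_minusSum (b : Seq N) : minusCount N b = minusSum 1 b := by
  rw [minusCount, Finset.card_filter]
  exact Finset.sum_congr rfl fun k _ => by cases b k <;> rfl

theorem minusSum_update_swap (w : Fin N → ℕ) {b : Seq N} {i j : Fin N} (hij : i ≠ j)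
    (hi : b i = false) (hj : b j = true) :
    minusSum w (update (update b i true) j false) + w i = minusSum w b + w j := by
  have := Finset.sum_add_pair_eq_of_eqOn_compl (M := ℕ) hij
    (f := fun k => if update (update b i true) j false k then 0 else w k)
    (g := fun k => if b k then 0 else w k) fun k hk => by simp_all
  simpa [minusSum, hij, hi, hj] using this

theorem minusSum_update_raise (w : Fin N → ℕ) {b : Seq N} {i j : Fin N} (hij : i ≠ j)
    (hi : b i = false) (hj : b j = false) :
    minusSum w (update (update b i true) j true) + (w i + w j) = minusSum w b := by
  have := Finset.sum_add_pair_eq_of_eqOn_compl (M := ℕ) hij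
    (f := fun k => if update (update b i true) j true k then 0 else w k)
    (g := fun k => if b k then 0 else w k) fun k hk => by simp_all
  simpa [minusSum, hij, hi, hj] using this

theorem eD_eq_some_of_plus_minus {i j : Fin N} (hij : i.val + 1 = j.val) {b : Seq N}
    (hi : b i = true) (hj : b j = false) :
    eD N j b = some (update (update b i false) j true) := by
  obtain ⟨i, hiN⟩ := i
  obtain ⟨j, hjN⟩ := j
  simp only at hij
  subst hij
  unfold eD
  rw [dif_pos (by simp only; omega)]
  simp [hi, hj]

theorem eD_self_eq_some_of_plus_plus {i j : Fin N} (hi : i.val + 2 = N) (hj : j.val + 1 = N)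
    {b : Seq N} (hbi : b i = true) (hbj : b j = true) :
    eD N N b = some (update (update b i false) j false) := by
  obtain ⟨i, hiN⟩ := i
  obtain ⟨j, hjN⟩ := j
  simp only at hi hj
  subst hi
  obtain rfl : j = i + 1 := by omega
  unfold eD
  rw [dif_neg (by omega), dif_pos ⟨rfl, by omega⟩]
  simp [hbi, hbj]

theorem eq_false_of_val_le {b : Seq N}
    (hno : ∀ i j : Fin N, i.val + 1 = j.val → b i = false → b j = false) {i : Fin N}
    (hi : b i = false) {m : ℕ} (him : i.val ≤ m) (hm : m < N) : b ⟨m, hm⟩ = false := by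
  induction m, him using Nat.le_induction with
  | base => exact hi
  | succ m _ ih => exact hno ⟨m, by omega⟩ ⟨m + 1, hm⟩ rfl (ih (by omega))

theorem exists_minus_plus_or_last_minus_minus {b : Seq N} (hb : BspPlus N b)
    (hne : b ≠ top N) :
    (∃ i j : Fin N, i.val + 1 = j.val ∧ b i = false ∧ b j = true) ∨
      ∃ i j : Fin N, i.val + 2 = N ∧ j.val + 1 = N ∧ b i = false ∧ b j = false := by
  refine or_iff_not_imp_left.2 fun hpat => ?_
  have hno : ∀ i j : Fin N, i.val + 1 = j.val → b i = false → b j = false := by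
    intro i j hij hi
    by_contra hj
    exact hpat ⟨i, j, hij, hi, by simpa using hj⟩
  obtain ⟨k, hk⟩ : ∃ k, b k = false := by
    by_contra! h
    exact hne (funext fun k => by simpa [top] using h k)
  have hN := k.pos
  obtain ⟨i, hiN, hi⟩ : ∃ i : Fin N, i.val + 2 = N ∧ b i = false := by
    by_contra! h
    -- otherwise the only `−` is the last entry
    have hsingle : Finset.univ.filter (fun i => b i = false) = {⟨N - 1, by omega⟩} := by
      ext i
      simp only [Finset.mem_filter, Finset.mem_univ, true_and, Finset.mem_singleton]
      constructor
      · intro hbi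
        refine Fin.ext (show i.val = N - 1 from ?_)
        by_contra hne
        have := i.isLt
        exact h ⟨N - 2, by omega⟩ (by simp only; omega) (eq_false_of_val_le hno hbi (by omega) _)
      · rintro rfl
        exact eq_false_of_val_le hno hk (by omega) _
    rw [BspPlus, minusCount, hsingle, Finset.card_singleton] at hb
    exact Nat.not_even_one hb
  exact ⟨i, ⟨N - 1, by omega⟩, hiN, by simp; omega, hi, eq_false_of_val_le hno hi (by omega) _⟩

theorem exists_eD_preimage_of_minus_plus (hN : 0 < N) {b : Seq N} (hb : BspPlus N b)
    (h0 : b ⟨0, hN⟩ = true) {i j : Fin N} (hij : i.val + 1 = j.val) (hi : b i = false)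
    (hj : b j = true) :
    ∃ c, (BspPlus N c ∧ c ⟨0, hN⟩ = true) ∧
      minusSum (fun k => N - k.val) c < minusSum (fun k => N - k.val) b ∧
      ∃ l, 2 ≤ l ∧ l ≤ N ∧ eD N l c = some b := by
  have hij' : i ≠ j := Fin.ne_of_val_ne (by omega)
  have hi0 : i ≠ ⟨0, hN⟩ := by rintro rfl; simp [h0] at hi
  have hj0 : j ≠ ⟨0, hN⟩ := Fin.ne_of_val_ne (by simp only; omega)
  have hj2 : 2 ≤ j.val := by have := Fin.val_ne_of_ne hi0; simp only at this; omega
  refine ⟨update (update b i true) j false, ⟨?_, ?_⟩, ?_, j, hj2, j.isLt.le, ?_⟩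
  · have := minusSum_update_swap 1 hij' hi hj
    rw [BspPlus, minusCount_eq_minusSum] at hb ⊢
    rwa [show minusSum 1 (update (update b i true) j false) = minusSum 1 b by simpa using this]
  · rwa [update_of_ne hj0.symm, update_of_ne hi0.symm]
  · have := minusSum_update_swap (fun k => N - k.val) hij' hi hj
    have := j.isLt
    omega
  · rw [eD_eq_some_of_plus_minus hij (by simp [hij']) (by simp)]
    exact congrArg some (update_update_update_update_eq_self hij' hi hj)

theorem exists_eD_preimage_of_last_minus_minus (hN : 0 < N) {b : Seq N} (hb : BspPlus N b)
    (h0 : b ⟨0, hN⟩ = true) {i j : Fin N} (hiN : i.val + 2 = N) (hjN : j.val + 1 = N)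
    (hi : b i = false) (hj : b j = false) :
    ∃ c, (BspPlus N c ∧ c ⟨0, hN⟩ = true) ∧
      minusSum (fun k => N - k.val) c < minusSum (fun k => N - k.val) b ∧
      ∃ l, 2 ≤ l ∧ l ≤ N ∧ eD N l c = some b := by
  have hij : i ≠ j := Fin.ne_of_val_ne (by omega)
  have hi0 : i ≠ ⟨0, hN⟩ := by rintro rfl; simp [h0] at hi
  have hj0 : j ≠ ⟨0, hN⟩ := by rintro rfl; simp [h0] at hj
  refine ⟨update (update b i true) j true, ⟨?_, ?_⟩, ?_, N, by omega, le_rfl, ?_⟩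
  · have := minusSum_update_raise 1 hij hi hj
    rw [BspPlus, minusCount_eq_minusSum] at hb ⊢
    simp only [Pi.one_apply] at this
    rw [← this] at hb
    simpa [Nat.even_add] using hb
  · rwa [update_of_ne hj0.symm, update_of_ne hi0.symm]
  · have := minusSum_update_raise (fun k => N - k.val) hij hi hj
    omega
  · rw [eD_self_eq_some_of_plus_plus hiN hjN (by simp [hij]) (by simp)]
    exact congrArg some (update_update_update_update_eq_self hij hi hj)

theorem exists_eD_preimage (hN : 0 < N) {b : Seq N} (hb : BspPlus N b)
    (h0 : b ⟨0, hN⟩ = true) (hne : b ≠ top N) :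
    ∃ c, (BspPlus N c ∧ c ⟨0, hN⟩ = true) ∧
      minusSum (fun k => N - k.val) c < minusSum (fun k => N - k.val) b ∧
      ∃ l, 2 ≤ l ∧ l ≤ N ∧ eD N l c = some b := by
  obtain ⟨i, j, hij, hi, hj⟩ | ⟨i, j, hiN, hjN, hi, hj⟩ :=
    exists_minus_plus_or_last_minus_minus hb hne
  · exact exists_eD_preimage_of_minus_plus hN hb h0 hij hi hj
  · exact exists_eD_preimage_of_last_minus_minus hN hb h0 hiN hjN hi hj

/-- Every `b ∈ B_sp^+` with first entry `+` is reachable from `(+,…,+)`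
using only the operators `ẽ_l` with `2 ≤ l ≤ N` (type `D_N`, `N ≥ 2`). -/
theorem BspPlus_first_plus_reachable (N : ℕ) (hN : 2 ≤ N) (b : Seq N)
    (hb : BspPlus N b) (h1 : b ⟨0, by omega⟩ = true) :
    Relation.ReflTransGen
      (fun x y => ∃ l, 2 ≤ l ∧ l ≤ N ∧ eD N l x = some y) (top N) b :=
  Relation.ReflTransGen.of_forall_exists_pred
    (P := fun c => BspPlus N c ∧ c ⟨0, by omega⟩ = true) (minusSum fun k => N - k.val)
    (fun _ hc hne => exists_eD_preimage (by omega) hc.1 hc.2 hne) ⟨hb, h1⟩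

end CrystalPaper
end

section
/- Let N ≥ 2. Equip B_sp^+ × B_sp^+ with the tensor-product type-D_N Kashiwara operators. Then every element u ⊗ v of B_sp^+ × B_sp^+ lies in the connected component of exactly one of the elements (+,…,+) ⊗ (+^k, −^{N−k}) with 0 ≤ k ≤ N and k ≡ N (mod 2), where (+^k, −^{N−k}) denotes the sign sequence whose first k entries are + and last N−k entries are −. Moreover, these elements are precisely the elements x ⊗ y with f̃_l(x ⊗ y) = 0 for all 1 ≤ l ≤ N. -/
namespace CrystalPaper

/-- `n`-fold iteration of a partial operator. -/
def iterOp {σ : Type*} (f : σ → Option σ) : ℕ → σ → Option σ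
  | 0, x => some x
  | n + 1, x => (f x).bind (iterOp f n)

/-- `max {n ≥ 0 : f^n x ≠ 0}`, as a supremum in `ℕ`.  Used for the string
lengths `ε_l(x) = max{n : ẽ_l^n x ≠ 0}` and `φ_l(x) = max{n : f̃_l^n x ≠ 0}`. -/
noncomputable def opMax {σ : Type*} (f : σ → Option σ) (x : σ) : ℕ :=
  sSup {n | iterOp f n x ≠ none}

/-- The tensor-product raising operator `ẽ_l` on pairs (lowest-weight convention):
`ẽ_l(x ⊗ y) = x ⊗ ẽ_l y` if `ε_l(x) ≤ φ_l(y)`, and `ẽ_l x ⊗ y` otherwise. -/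
noncomputable def teD (N l : ℕ) (p : Seq N × Seq N) : Option (Seq N × Seq N) :=
  if opMax (eD N l) p.1 ≤ opMax (fD N l) p.2 then (eD N l p.2).map fun y => (p.1, y)
  else (eD N l p.1).map fun x => (x, p.2)

/-- The tensor-product lowering operator `f̃_l` on pairs (lowest-weight convention):
`f̃_l(x ⊗ y) = x ⊗ f̃_l y` if `ε_l(x) < φ_l(y)`, and `f̃_l x ⊗ y` otherwise. -/
noncomputable def tfD (N l : ℕ) (p : Seq N × Seq N) : Option (Seq N × Seq N) :=
  if opMax (eD N l) p.1 < opMax (fD N l) p.2 then (fD N l p.2).map fun y => (p.1, y)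
  else (fD N l p.1).map fun x => (x, p.2)

/-- Connectedness in the tensor product of two type-`D_N` spin crystals:
the equivalence relation generated by single applications of the operators
`ẽ_l`, `f̃_l` with `1 ≤ l ≤ N`. -/
def ConnD (N : ℕ) (p q : Seq N × Seq N) : Prop :=
  Relation.EqvGen (fun p q => ∃ l, 1 ≤ l ∧ l ≤ N ∧ (teD N l p = some q ∨ tfD N l p = some q)) p q
section Basic

variable {N l : ℕ}

lemma fD_mid (hl : 1 ≤ l) (hlN : l + 1 ≤ N) (b : Seq N) :
    fD N l b =
      if b ⟨l-1, by omega⟩ = false ∧ b ⟨l, by omega⟩ = true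
      then some (Function.update (Function.update b ⟨l-1, by omega⟩ true) ⟨l, by omega⟩ false)
      else none := by
  unfold fD; rw [dif_pos ⟨hl, hlN⟩]

lemma fD_last (hN : 2 ≤ N) (b : Seq N) :
    fD N N b =
      if b ⟨N-2, by omega⟩ = false ∧ b ⟨N-1, by omega⟩ = false
      then some (Function.update (Function.update b ⟨N-2, by omega⟩ true) ⟨N-1, by omega⟩ true)
      else none := by
  unfold fD
  rw [dif_neg (by omega), dif_pos ⟨rfl, hN⟩]

lemma eD_mid (hl : 1 ≤ l) (hlN : l + 1 ≤ N) (b : Seq N) :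
    eD N l b =
      if b ⟨l-1, by omega⟩ = true ∧ b ⟨l, by omega⟩ = false
      then some (Function.update (Function.update b ⟨l-1, by omega⟩ false) ⟨l, by omega⟩ true)
      else none := by
  unfold eD; rw [dif_pos ⟨hl, hlN⟩]

lemma eD_last (hN : 2 ≤ N) (b : Seq N) :
    eD N N b =
      if b ⟨N-2, by omega⟩ = true ∧ b ⟨N-1, by omega⟩ = true
      then some (Function.update (Function.update b ⟨N-2, by omega⟩ false) ⟨N-1, by omega⟩ false)
      else none := by
  unfold eD
  rw [dif_neg (by omega), dif_pos ⟨rfl, hN⟩]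

end Basic
section Basic2

variable {N l : ℕ} {b c : Seq N}

lemma update2_apply (b : Seq N) {i j : Fin N} (u : Fin N) (s t : Bool) :
    (Function.update (Function.update b i s) j t) u =
      if u = j then t else if u = i then s else b u := by
  by_cases h1 : u = j
  · subst h1; simp
  · by_cases h2 : u = i
    · subst h2; simp [Function.update_of_ne h1, h1]
    · simp [Function.update_of_ne h1, Function.update_of_ne h2, h1, h2]

lemma flip2_aux {i j : Fin N} (hij : i ≠ j) (s t : Bool)
    (h : (if b i = s ∧ b j = t then
            some (Function.update (Function.update b i (!s)) j (!t)) else none) = some c) :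
    (if c i = !s ∧ c j = !t then
        some (Function.update (Function.update c i s) j t) else none) = some b := by
  split_ifs at h with hc
  · obtain ⟨hb1, hb2⟩ := hc
    obtain rfl : Function.update (Function.update b i (!s)) j (!t) = c := Option.some.inj h
    rw [if_pos (by simp [update2_apply, hij, hij.symm])]
    congr 1
    funext u
    simp only [update2_apply]
    split_ifs with h1 h2
    all_goals subst_vars
    all_goals simp_all

lemma flip2_iff {i j : Fin N} (hij : i ≠ j) (s t : Bool) :
    (if b i = s ∧ b j = t then
        some (Function.update (Function.update b i (!s)) j (!t)) else none) = some c ↔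
    (if c i = !s ∧ c j = !t then
        some (Function.update (Function.update c i s) j t) else none) = some b := by
  constructor
  · exact flip2_aux hij s t
  · intro h
    have h' : (if c i = !s ∧ c j = !t then
        some (Function.update (Function.update c i (!(!s))) j (!(!t))) else none) = some b := by
      rw [Bool.not_not, Bool.not_not]; exact h
    have h2 := flip2_aux hij (!s) (!t) h'
    rw [Bool.not_not, Bool.not_not] at h2
    exact h2

lemma fD_none_out (h : ¬ (1 ≤ l ∧ l ≤ N) ∨ (l = N ∧ N < 2)) : fD N l b = none := by
  unfold fD
  rw [dif_neg (by omega), dif_neg (by omega)]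

lemma eD_none_out (h : ¬ (1 ≤ l ∧ l ≤ N) ∨ (l = N ∧ N < 2)) : eD N l b = none := by
  unfold eD
  rw [dif_neg (by omega), dif_neg (by omega)]

lemma fD_some_range (h : fD N l b = some c) : 1 ≤ l ∧ l ≤ N := by
  by_contra hc
  rw [fD_none_out (Or.inl hc)] at h
  exact nomatch h

lemma eD_some_range (h : eD N l b = some c) : 1 ≤ l ∧ l ≤ N := by
  by_contra hc
  rw [eD_none_out (Or.inl hc)] at h
  exact nomatch h

lemma ne_mid (hl : 1 ≤ l) (hl1 : l + 1 ≤ N) :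
    (⟨l-1, by omega⟩ : Fin N) ≠ ⟨l, by omega⟩ := by
  intro h
  have := congrArg Fin.val h
  simp only [] at this
  omega

lemma ne_last (hN : 2 ≤ N) :
    (⟨N-2, by omega⟩ : Fin N) ≠ ⟨N-1, by omega⟩ := by
  intro h
  have := congrArg Fin.val h
  simp only [] at this
  omega

lemma fD_iff_eD (hl : 1 ≤ l) (hN : l ≤ N) : fD N l b = some c ↔ eD N l c = some b := by
  rcases Nat.lt_or_ge l N with hlt | hge
  · have hl1 : l + 1 ≤ N := hlt
    rw [fD_mid hl hl1, eD_mid hl hl1]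
    exact flip2_iff (b := b) (c := c) (ne_mid hl hl1) false true
  · have hlN : l = N := by omega
    subst hlN
    rcases Nat.lt_or_ge l 2 with h2 | h2
    · rw [fD_none_out (Or.inr ⟨rfl, h2⟩), eD_none_out (Or.inr ⟨rfl, h2⟩)]
      simp
    · rw [fD_last h2, eD_last h2]
      exact flip2_iff (b := b) (c := c) (ne_last h2) false false

lemma fD_some_imp_eD_none (h : fD N l b = some c) : eD N l b = none := by
  obtain ⟨hl, hN⟩ := fD_some_range h
  rcases Nat.lt_or_ge l N with hlt | hge
  · rw [fD_mid hl hlt] at h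
    split_ifs at h with hc
    rw [eD_mid hl hlt, if_neg (by simp_all)]
  · have : l = N := by omega
    subst this
    rcases Nat.lt_or_ge l 2 with h2 | h2
    · exact eD_none_out (Or.inr ⟨rfl, h2⟩)
    · rw [fD_last h2] at h
      split_ifs at h with hc
      rw [eD_last h2, if_neg (by simp_all)]

lemma eD_some_imp_fD_none (h : eD N l b = some c) : fD N l b = none := by
  obtain ⟨hl, hN⟩ := eD_some_range h
  rcases Nat.lt_or_ge l N with hlt | hge
  · rw [eD_mid hl hlt] at h
    split_ifs at h with hc
    rw [fD_mid hl hlt, if_neg (by simp_all)]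
  · have : l = N := by omega
    subst this
    rcases Nat.lt_or_ge l 2 with h2 | h2
    · exact fD_none_out (Or.inr ⟨rfl, h2⟩)
    · rw [eD_last h2] at h
      split_ifs at h with hc
      rw [fD_last h2, if_neg (by simp_all)]

lemma fD_fD (h : fD N l b = some c) : fD N l c = none := by
  rw [fD_iff_eD (fD_some_range h).1 (fD_some_range h).2] at h
  exact eD_some_imp_fD_none h

lemma eD_eD (h : eD N l b = some c) : eD N l c = none := by
  rw [← fD_iff_eD (eD_some_range h).1 (eD_some_range h).2] at h
  exact fD_some_imp_eD_none h

end Basic2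
section OpMax

variable {σ : Type*} {f : σ → Option σ} {x y : σ}

lemma iterOp_zero (f : σ → Option σ) (x : σ) : iterOp f 0 x = some x := rfl

lemma iterOp_succ (f : σ → Option σ) (n : ℕ) (x : σ) :
    iterOp f (n+1) x = (f x).bind (iterOp f n) := rfl

lemma opMax_eq_zero (h : f x = none) : opMax f x = 0 := by
  have hs : {n | iterOp f n x ≠ none} = {0} := by
    ext n
    cases n with
    | zero => simp [iterOp_zero]
    | succ m => simp [iterOp_succ, h]
  rw [opMax, hs]
  exact csSup_singleton 0

lemma opMax_eq_one (h : f x = some y) (h2 : f y = none) : opMax f x = 1 := by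
  apply IsGreatest.csSup_eq
  constructor
  · show iterOp f 1 x ≠ none
    rw [iterOp_succ, h]
    simp [iterOp_zero]
  · rintro n hn
    by_contra hc
    obtain ⟨m, rfl⟩ : ∃ m, n = m + 2 := ⟨n - 2, by omega⟩
    apply hn
    rw [iterOp_succ, h]
    show iterOp f (m+1) y = none
    rw [iterOp_succ, h2]
    rfl

variable {N l : ℕ} (p : Seq N × Seq N)

lemma tfD_eq : tfD N l p =
    if eD N l p.1 = none ∧ fD N l p.2 ≠ none then (fD N l p.2).map (fun y => (p.1, y))
    else (fD N l p.1).map (fun x => (x, p.2)) := by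
  unfold tfD
  rcases h1 : eD N l p.1 with _ | x'
  · rcases h2 : fD N l p.2 with _ | y'
    · rw [if_neg (by simp [opMax_eq_zero h1, opMax_eq_zero h2]), if_neg (by simp [h2])]
    · rw [if_pos (by simp [opMax_eq_zero h1, opMax_eq_one h2 (fD_fD h2)]),
        if_pos (by simp [h2])]
  · rcases h2 : fD N l p.2 with _ | y'
    · rw [if_neg (by simp [opMax_eq_one h1 (eD_eD h1), opMax_eq_zero h2]),
        if_neg (by simp [h1, h2])]
    · rw [if_neg (by simp [opMax_eq_one h1 (eD_eD h1), opMax_eq_one h2 (fD_fD h2)]),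
        if_neg (by simp [h1, h2])]

lemma teD_eq : teD N l p =
    if eD N l p.1 = none ∨ fD N l p.2 ≠ none then (eD N l p.2).map (fun y => (p.1, y))
    else (eD N l p.1).map (fun x => (x, p.2)) := by
  unfold teD
  rcases h1 : eD N l p.1 with _ | x'
  · rcases h2 : fD N l p.2 with _ | y'
    · rw [if_pos (by simp [opMax_eq_zero h1, opMax_eq_zero h2]), if_pos (by simp [h1])]
    · rw [if_pos (by simp [opMax_eq_zero h1, opMax_eq_one h2 (fD_fD h2)]),
        if_pos (by simp [h1])]
  · rcases h2 : fD N l p.2 with _ | y'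
    · rw [if_neg (by simp [opMax_eq_one h1 (eD_eD h1), opMax_eq_zero h2]),
        if_neg (by simp [h1, h2])]
    · rw [if_pos (by simp [opMax_eq_one h1 (eD_eD h1), opMax_eq_one h2 (fD_fD h2)]),
        if_pos (by simp [h2])]

variable {p} {q : Seq N × Seq N}

lemma tfD_teD (h : tfD N l p = some q) : teD N l q = some p := by
  rw [tfD_eq] at h
  split_ifs at h with hc
  · obtain ⟨hc1, hc2⟩ := hc
    rcases h2 : fD N l p.2 with _ | y'
    · exact absurd h2 hc2
    · rw [h2] at h
      obtain rfl : (p.1, y') = q := by simpa using h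
      obtain ⟨hl, hN⟩ := fD_some_range h2
      rw [teD_eq]
      rw [if_pos (Or.inl hc1)]
      show (eD N l y').map _ = _
      rw [(fD_iff_eD hl hN).mp h2]
      rfl
  · rcases h1 : fD N l p.1 with _ | x'
    · rw [h1] at h; exact absurd h (by simp)
    · rw [h1] at h
      obtain rfl : (x', p.2) = q := by simpa using h
      obtain ⟨hl, hN⟩ := fD_some_range h1
      have he1 : eD N l p.1 = none := fD_some_imp_eD_none h1
      have hf2 : fD N l p.2 = none := by
        by_contra hf
        exact hc ⟨he1, hf⟩
      rw [teD_eq]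
      rw [if_neg ?_]
      · show (eD N l x').map _ = _
        rw [(fD_iff_eD hl hN).mp h1]
        rfl
      · push_neg
        refine ⟨?_, hf2⟩
        show eD N l x' ≠ none
        rw [(fD_iff_eD hl hN).mp h1]
        simp

lemma teD_tfD (h : teD N l p = some q) : tfD N l q = some p := by
  rw [teD_eq] at h
  split_ifs at h with hc
  · rcases h2 : eD N l p.2 with _ | y'
    · rw [h2] at h; exact absurd h (by simp)
    · rw [h2] at h
      obtain rfl : (p.1, y') = q := by simpa using h
      obtain ⟨hl, hN⟩ := eD_some_range h2
      have he1 : eD N l p.1 = none := by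
        rcases hc with hc | hc
        · exact hc
        · exact absurd (eD_some_imp_fD_none h2) hc
      have hf2 : fD N l y' ≠ none := by
        rw [(fD_iff_eD hl hN).mpr h2]; simp
      rw [tfD_eq, if_pos ⟨he1, hf2⟩]
      show (fD N l y').map _ = _
      rw [(fD_iff_eD hl hN).mpr h2]
      rfl
  · push_neg at hc
    obtain ⟨hc1, hc2⟩ := hc
    rcases h1 : eD N l p.1 with _ | x'
    · exact absurd h1 hc1
    · rw [h1] at h
      obtain rfl : (x', p.2) = q := by simpa using h
      obtain ⟨hl, hN⟩ := eD_some_range h1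
      rw [tfD_eq]
      rw [if_neg (by simp [hc2])]
      show (fD N l x').map _ = _
      rw [(fD_iff_eD hl hN).mpr h1]
      rfl

lemma tfD_some_range (h : tfD N l p = some q) : 1 ≤ l ∧ l ≤ N := by
  rw [tfD_eq] at h
  split_ifs at h with hc
  · rcases h2 : fD N l p.2 with _ | y'
    · rw [h2] at h; exact absurd h (by simp)
    · exact fD_some_range h2
  · rcases h1 : fD N l p.1 with _ | x'
    · rw [h1] at h; exact absurd h (by simp)
    · exact fD_some_range h1

end OpMax
section Invariant

/-- Letter value: `(+,−) ↦ 1`, `(−,+) ↦ −1`, else `0`. -/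
def cval : Bool → Bool → ℤ
  | true, false => 1
  | false, true => -1
  | _, _ => 0

/-- Step values of a pair of sign sequences. -/
def cstep (N : ℕ) (p : Seq N × Seq N) (j : ℕ) : ℤ :=
  if h : j < N then cval (p.1 ⟨j, h⟩) (p.2 ⟨j, h⟩) else 0

/-- Prefix sums. -/
def dsum (N : ℕ) (p : Seq N × Seq N) (i : ℕ) : ℤ :=
  ∑ j ∈ Finset.range i, cstep N p j

/-- Running maximum over all prefixes. -/
def msup (N : ℕ) (p : Seq N × Seq N) : ℤ :=
  (Finset.range (N+1)).sup' ⟨0, by simp⟩ (dsum N p)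

/-- The component invariant. -/
def Ival (N : ℕ) (p : Seq N × Seq N) : ℤ :=
  msup N p + (msup N p + dsum N p N) % 2

variable {N : ℕ} {p q : Seq N × Seq N}

lemma cstep_lt {j : ℕ} (h : j < N) :
    cstep N p j = cval (p.1 ⟨j, h⟩) (p.2 ⟨j, h⟩) := by
  rw [cstep, dif_pos h]

lemma dsum_succ (i : ℕ) : dsum N p (i+1) = dsum N p i + cstep N p i :=
  Finset.sum_range_succ _ _

lemma dsum_zero : dsum N p 0 = 0 := rfl

lemma dsum_eq_of_lt {i : ℕ} (h : ∀ j < i, cstep N p j = cstep N q j) :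
    dsum N p i = dsum N q i :=
  Finset.sum_congr rfl (fun j hj => h j (Finset.mem_range.mp hj))

lemma dsum_eq_of_two (a : ℕ) (h : ∀ j, j ≠ a → j ≠ a+1 → cstep N p j = cstep N q j)
    (hsum : cstep N p a + cstep N p (a+1) = cstep N q a + cstep N q (a+1))
    {i : ℕ} (hi : i ≠ a + 1) : dsum N p i = dsum N q i := by
  rcases Nat.lt_or_ge i (a+1) with hlt | hge
  · exact dsum_eq_of_lt (fun j hj => h j (by omega) (by omega))
  · have hge2 : a + 2 ≤ i := by omega
    have hsub : dsum N p i - dsum N q i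
        = ∑ j ∈ Finset.range i, (cstep N p j - cstep N q j) := by
      rw [Finset.sum_sub_distrib]; rfl
    have hpair : ({a, a+1} : Finset ℕ) ⊆ Finset.range i := by
      intro t ht
      simp only [Finset.mem_insert, Finset.mem_singleton] at ht
      rcases ht with rfl | rfl <;> simp [Finset.mem_range] <;> omega
    have hzero : ∀ t ∈ Finset.range i, t ∉ ({a, a+1} : Finset ℕ) →
        cstep N p t - cstep N q t = 0 := by
      intro t _ ht
      simp only [Finset.mem_insert, Finset.mem_singleton, not_or] at ht
      rw [h t ht.1 ht.2]; ring
    have : ∑ j ∈ Finset.range i, (cstep N p j - cstep N q j)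
        = ∑ j ∈ ({a, a+1} : Finset ℕ), (cstep N p j - cstep N q j) :=
      (Finset.sum_subset hpair (fun t ht1 ht2 => hzero t ht1 ht2)).symm
    rw [this, Finset.sum_pair (by omega)] at hsub
    omega

lemma le_msup {i : ℕ} (h : i ≤ N) : dsum N p i ≤ msup N p :=
  Finset.le_sup' _ (by simp [Finset.mem_range]; omega)

lemma msup_le {M : ℤ} (h : ∀ i ≤ N, dsum N p i ≤ M) : msup N p ≤ M :=
  Finset.sup'_le _ _ (fun i hi => h i (by simpa [Nat.lt_succ_iff] using Finset.mem_range.mp hi))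

lemma msup_nonneg : 0 ≤ msup N p := by
  have := le_msup (p := p) (Nat.zero_le N)
  rwa [dsum_zero] at this

lemma msup_split {n : ℕ} (hN : N = n + 2) :
    msup N p = max ((Finset.range (n+1)).sup' ⟨0, by simp⟩ (dsum N p))
      (max (dsum N p (n+1)) (dsum N p (n+2))) := by
  subst hN
  apply le_antisymm
  · apply msup_le
    intro i hi
    rcases Nat.lt_or_ge i (n+1) with h1 | h1
    · exact le_trans (Finset.le_sup' _ (Finset.mem_range.mpr h1)) (le_max_left _ _)
    · rcases Nat.eq_or_lt_of_le h1 with h2 | h2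
      · rw [← h2]
        exact le_trans (le_max_left _ _) (le_max_right _ _)
      · have : i = n + 2 := by omega
        rw [this]
        exact le_trans (le_max_right _ _) (le_max_right _ _)
  · apply max_le
    · apply Finset.sup'_le
      intro i hi
      exact le_msup (by simp only [Finset.mem_range] at hi; omega)
    · exact max_le (le_msup (by omega)) (le_msup (by omega))

end Invariant
section Invariance

lemma max3_facts (A b c : ℤ) :
    (max A (max b c) = A ∨ max A (max b c) = b ∨ max A (max b c) = c) ∧
      A ≤ max A (max b c) ∧ b ≤ max A (max b c) ∧ c ≤ max A (max b c) := by
  refine ⟨?_, le_max_left _ _, ?_, ?_⟩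
  · rcases max_choice A (max b c) with h | h
    · exact Or.inl h
    · rcases max_choice b c with h2 | h2
      · exact Or.inr (Or.inl (h.trans h2))
      · exact Or.inr (Or.inr (h.trans h2))
  · exact le_trans (le_max_left _ _) (le_max_right _ _)
  · exact le_trans (le_max_right _ _) (le_max_right _ _)

/-- Invariance of `Ival` under `tfD` for `1 ≤ l < N`. -/
lemma Ival_tfD_mid {N m : ℕ} {p q : Seq N × Seq N} (hlN : m + 2 ≤ N)
    (h : tfD N (m+1) p = some q) : Ival N q = Ival N p := by
  have hl : 1 ≤ m + 1 := by omega
  have hmN : m < N := by omega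
  have hm1N : m + 1 < N := by omega
  have hij : (⟨m, hmN⟩ : Fin N) ≠ ⟨m+1, hm1N⟩ := by
    intro hcon; exact absurd (congrArg Fin.val hcon) (by simp)
  rw [tfD_eq] at h
  split_ifs at h with hc
  · -- act on the second factor
    obtain ⟨he1, hf2⟩ := hc
    rcases h2 : fD N (m+1) p.2 with _ | y'
    · rw [h2] at h; exact absurd h (by simp)
    rw [h2] at h
    have hq : q = (p.1, y') := by simpa using h.symm
    rw [fD_mid hl (by omega)] at h2
    simp only [Nat.add_sub_cancel] at h2
    split_ifs at h2 with hcond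
    obtain ⟨hy1, hy2⟩ := hcond
    have hqc1 : q.1 = p.1 := by rw [hq]
    have hqc2 : q.2 = Function.update (Function.update p.2 ⟨m, hmN⟩ true) ⟨m+1, hm1N⟩ false := by
      rw [hq, ← Option.some.inj h2]
    have hx : ¬(p.1 ⟨m, hmN⟩ = true ∧ p.1 ⟨m+1, hm1N⟩ = false) := by
      intro hcon
      rw [eD_mid hl (by omega)] at he1
      simp only [Nat.add_sub_cancel] at he1
      rw [if_pos hcon] at he1
      exact nomatch he1
    have hout : ∀ t, t ≠ m → t ≠ m + 1 → cstep N q t = cstep N p t := by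
      intro t ht1 ht2
      by_cases htN : t < N
      · rw [cstep_lt htN, cstep_lt htN, hqc1, hqc2, update2_apply]
        rw [if_neg (by intro hcon; exact ht2 (congrArg Fin.val hcon)),
          if_neg (by intro hcon; exact ht1 (congrArg Fin.val hcon))]
      · rw [cstep, cstep, dif_neg htN, dif_neg htN]
    have hcq1 : cstep N q m = cval (p.1 ⟨m, hmN⟩) true := by
      rw [cstep_lt hmN, hqc1, hqc2, update2_apply, if_neg hij, if_pos rfl]
    have hcq2 : cstep N q (m+1) = cval (p.1 ⟨m+1, hm1N⟩) false := by
      rw [cstep_lt hm1N, hqc1, hqc2, update2_apply, if_pos rfl]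
    have hcp1 : cstep N p m = cval (p.1 ⟨m, hmN⟩) false := by
      rw [cstep_lt hmN, hy1]
    have hcp2 : cstep N p (m+1) = cval (p.1 ⟨m+1, hm1N⟩) true := by
      rw [cstep_lt hm1N, hy2]
    have hsum : cstep N q m + cstep N q (m+1) = cstep N p m + cstep N p (m+1) := by
      rw [hcq1, hcq2, hcp1, hcp2]
      cases p.1 ⟨m, hmN⟩ <;> cases p.1 ⟨m+1, hm1N⟩ <;> decide
    have hdeq : ∀ i', i' ≠ m + 1 → dsum N q i' = dsum N p i' :=
      fun i' hi' => dsum_eq_of_two m hout hsum hi'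
    have hdl : dsum N q (m+1) = dsum N p (m+1) - 1 := by
      rw [dsum_succ, dsum_succ, hdeq m (by omega), hcq1, hcp1]
      have : ∀ u : Bool, cval u true = cval u false - 1 := by decide
      rw [this]; ring
    have hkey : msup N q = msup N p := by
      apply le_antisymm
      · apply msup_le
        intro i' hi'
        by_cases hit : i' = m + 1
        · subst hit
          rw [hdl]
          have := le_msup (p := p) hi'
          omega
        · rw [hdeq i' hit]; exact le_msup hi'
      · apply msup_le
        intro i' hi'
        by_cases hit : i' = m + 1
        · subst hit
          by_cases hx1 : p.1 ⟨m, hmN⟩ = true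
          · have hx2 : p.1 ⟨m+1, hm1N⟩ = true := by
              cases hj2 : p.1 ⟨m+1, hm1N⟩
              · exact absurd ⟨hx1, hj2⟩ hx
              · rfl
            have e1 : dsum N q (m+1+1) = dsum N q (m+1) + cstep N q (m+1) := dsum_succ _
            rw [hcq2, hx2] at e1
            have e2 : dsum N p (m+1) = dsum N q (m+1+1) := by
              rw [e1, hdl, show cval true false = 1 from rfl]; ring
            rw [e2]
            exact le_msup (by omega)
          · have hx1' : p.1 ⟨m, hmN⟩ = false := by
              cases hj1 : p.1 ⟨m, hmN⟩
              · rfl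
              · exact absurd hj1 hx1
            have e2 : dsum N p (m+1) = dsum N q m := by
              rw [dsum_succ, hcp1, hx1', hdeq m (by omega),
                show cval false false = 0 from rfl]
              ring
            rw [e2]
            exact le_msup (by omega)
        · rw [← hdeq i' hit]; exact le_msup hi'
    rw [Ival, Ival, hkey, hdeq N (by omega)]
  · -- act on the first factor
    rcases h1 : fD N (m+1) p.1 with _ | x'
    · rw [h1] at h; exact absurd h (by simp)
    rw [h1] at h
    have hq : q = (x', p.2) := by simpa using h.symm
    have he1 : eD N (m+1) p.1 = none := fD_some_imp_eD_none h1
    have hf2 : fD N (m+1) p.2 = none := by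
      by_contra hf
      exact hc ⟨he1, hf⟩
    rw [fD_mid hl (by omega)] at h1
    simp only [Nat.add_sub_cancel] at h1
    split_ifs at h1 with hcond
    obtain ⟨hx1, hx2⟩ := hcond
    have hqc2 : q.2 = p.2 := by rw [hq]
    have hqc1 : q.1 = Function.update (Function.update p.1 ⟨m, hmN⟩ true) ⟨m+1, hm1N⟩ false := by
      rw [hq, ← Option.some.inj h1]
    have hy : ¬(p.2 ⟨m, hmN⟩ = false ∧ p.2 ⟨m+1, hm1N⟩ = true) := by
      intro hcon
      rw [fD_mid hl (by omega)] at hf2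
      simp only [Nat.add_sub_cancel] at hf2
      rw [if_pos hcon] at hf2
      exact nomatch hf2
    have hout : ∀ t, t ≠ m → t ≠ m + 1 → cstep N q t = cstep N p t := by
      intro t ht1 ht2
      by_cases htN : t < N
      · rw [cstep_lt htN, cstep_lt htN, hqc1, hqc2, update2_apply]
        rw [if_neg (by intro hcon; exact ht2 (congrArg Fin.val hcon)),
          if_neg (by intro hcon; exact ht1 (congrArg Fin.val hcon))]
      · rw [cstep, cstep, dif_neg htN, dif_neg htN]
    have hcq1 : cstep N q m = cval true (p.2 ⟨m, hmN⟩) := by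
      rw [cstep_lt hmN, hqc1, hqc2, update2_apply, if_neg hij, if_pos rfl]
    have hcq2 : cstep N q (m+1) = cval false (p.2 ⟨m+1, hm1N⟩) := by
      rw [cstep_lt hm1N, hqc1, hqc2, update2_apply, if_pos rfl]
    have hcp1 : cstep N p m = cval false (p.2 ⟨m, hmN⟩) := by
      rw [cstep_lt hmN, hx1]
    have hcp2 : cstep N p (m+1) = cval true (p.2 ⟨m+1, hm1N⟩) := by
      rw [cstep_lt hm1N, hx2]
    have hsum : cstep N q m + cstep N q (m+1) = cstep N p m + cstep N p (m+1) := by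
      rw [hcq1, hcq2, hcp1, hcp2]
      cases p.2 ⟨m, hmN⟩ <;> cases p.2 ⟨m+1, hm1N⟩ <;> decide
    have hdeq : ∀ i', i' ≠ m + 1 → dsum N q i' = dsum N p i' :=
      fun i' hi' => dsum_eq_of_two m hout hsum hi'
    have hdl : dsum N q (m+1) = dsum N p (m+1) + 1 := by
      rw [dsum_succ, dsum_succ, hdeq m (by omega), hcq1, hcp1]
      have : ∀ u : Bool, cval true u = cval false u + 1 := by decide
      rw [this]; ring
    have hkey : msup N q = msup N p := by
      apply le_antisymm
      · apply msup_le
        intro i' hi'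
        by_cases hit : i' = m + 1
        · subst hit
          by_cases hy2 : p.2 ⟨m+1, hm1N⟩ = false
          · have e2 : dsum N q (m+1) = dsum N p (m+1+1) := by
              rw [dsum_succ (p := p) (m+1), hcp2, hy2, hdl,
                show cval true false = 1 from rfl]
            rw [e2]
            exact le_msup (by omega)
          · have hy2' : p.2 ⟨m+1, hm1N⟩ = true := by
              cases hj2 : p.2 ⟨m+1, hm1N⟩
              · exact absurd hj2 hy2
              · rfl
            have hy1 : p.2 ⟨m, hmN⟩ = true := by
              cases hj1 : p.2 ⟨m, hmN⟩
              · exact absurd ⟨hj1, hy2'⟩ hy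
              · rfl
            have e2 : dsum N q (m+1) = dsum N p m := by
              rw [hdl, dsum_succ, hcp1, hy1, show cval false true = -1 from rfl]
              ring
            rw [e2]
            exact le_msup (by omega)
        · rw [hdeq i' hit]; exact le_msup hi'
      · apply msup_le
        intro i' hi'
        by_cases hit : i' = m + 1
        · subst hit
          have : dsum N p (m+1) = dsum N q (m+1) - 1 := by rw [hdl]; ring
          rw [this]
          have := le_msup (p := q) hi'
          omega
        · rw [← hdeq i' hit]; exact le_msup hi'
    rw [Ival, Ival, hkey, hdeq N (by omega)]

end Invariance
section InvarianceLast

/-- Invariance of `Ival` under `tfD` for `l = N`. -/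
lemma Ival_tfD_last {n : ℕ} {p q : Seq (n+2) × Seq (n+2)}
    (h : tfD (n+2) (n+2) p = some q) : Ival (n+2) q = Ival (n+2) p := by
  have hnN : n < n + 2 := by omega
  have hn1N : n + 1 < n + 2 := by omega
  have hij : (⟨n, hnN⟩ : Fin (n+2)) ≠ ⟨n+1, hn1N⟩ := by
    intro hcon; exact absurd (congrArg Fin.val hcon) (by simp)
  have hnormal : n + 2 - 2 = n := by omega
  have hnormal1 : n + 2 - 1 = n + 1 := by omega
  rw [tfD_eq] at h
  split_ifs at h with hc
  · -- act on the second factor: y (−,−) → (+,+)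
    obtain ⟨he1, hf2⟩ := hc
    rcases h2 : fD (n+2) (n+2) p.2 with _ | y'
    · rw [h2] at h; exact absurd h (by simp)
    rw [h2] at h
    have hq : q = (p.1, y') := by simpa using h.symm
    rw [fD_last (by omega)] at h2
    simp only [hnormal, hnormal1] at h2
    split_ifs at h2 with hcond
    obtain ⟨hy1, hy2⟩ := hcond
    have hqc1 : q.1 = p.1 := by rw [hq]
    have hqc2 : q.2 = Function.update (Function.update p.2 ⟨n, hnN⟩ true) ⟨n+1, hn1N⟩ true := by
      rw [hq, ← Option.some.inj h2]
    have hx : ¬(p.1 ⟨n, hnN⟩ = true ∧ p.1 ⟨n+1, hn1N⟩ = true) := by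
      intro hcon
      rw [eD_last (by omega)] at he1
      simp only [hnormal, hnormal1] at he1
      rw [if_pos hcon] at he1
      exact nomatch he1
    have hout : ∀ t, t ≠ n → t ≠ n + 1 → cstep (n+2) q t = cstep (n+2) p t := by
      intro t ht1 ht2
      by_cases htN : t < n + 2
      · rw [cstep_lt htN, cstep_lt htN, hqc1, hqc2, update2_apply]
        rw [if_neg (by intro hcon; exact ht2 (congrArg Fin.val hcon)),
          if_neg (by intro hcon; exact ht1 (congrArg Fin.val hcon))]
      · rw [cstep, cstep, dif_neg htN, dif_neg htN]
    have hcq1 : cstep (n+2) q n = cval (p.1 ⟨n, hnN⟩) true := by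
      rw [cstep_lt hnN, hqc1, hqc2, update2_apply, if_neg hij, if_pos rfl]
    have hcq2 : cstep (n+2) q (n+1) = cval (p.1 ⟨n+1, hn1N⟩) true := by
      rw [cstep_lt hn1N, hqc1, hqc2, update2_apply, if_pos rfl]
    have hcp1 : cstep (n+2) p n = cval (p.1 ⟨n, hnN⟩) false := by
      rw [cstep_lt hnN, hy1]
    have hcp2 : cstep (n+2) p (n+1) = cval (p.1 ⟨n+1, hn1N⟩) false := by
      rw [cstep_lt hn1N, hy2]
    have hdeq : ∀ i', i' ≤ n → dsum (n+2) q i' = dsum (n+2) p i' := by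
      intro i' hi'
      exact dsum_eq_of_lt (fun j hj => (hout j (by omega) (by omega)).symm) |>.symm
    have hAq : (Finset.range (n+1)).sup' ⟨0, by simp⟩ (dsum (n+2) q)
        = (Finset.range (n+1)).sup' ⟨0, by simp⟩ (dsum (n+2) p) :=
      Finset.sup'_congr _ rfl (fun a ha => hdeq a (by
        simp only [Finset.mem_range] at ha; omega))
    have hr : dsum (n+2) p n ≤ (Finset.range (n+1)).sup' ⟨0, by simp⟩ (dsum (n+2) p) :=
      Finset.le_sup' (dsum (n+2) p) (Finset.mem_range.mpr (by omega))
    have hdq0 : dsum (n+2) q n = dsum (n+2) p n := hdeq n le_rfl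
    have Ep1 : dsum (n+2) p (n+1) = dsum (n+2) p n + cval (p.1 ⟨n, hnN⟩) false := by
      rw [dsum_succ, hcp1]
    have Ep2 : dsum (n+2) p (n+2) = dsum (n+2) p (n+1) + cval (p.1 ⟨n+1, hn1N⟩) false := by
      rw [dsum_succ, hcp2]
    have Eq1 : dsum (n+2) q (n+1) = dsum (n+2) p n + cval (p.1 ⟨n, hnN⟩) true := by
      rw [dsum_succ, hcq1, hdq0]
    have Eq2 : dsum (n+2) q (n+2) = dsum (n+2) q (n+1) + cval (p.1 ⟨n+1, hn1N⟩) true := by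
      rw [dsum_succ, hcq2]
    rw [Ival, Ival, msup_split rfl, msup_split rfl, hAq, Eq2, Eq1, Ep2, Ep1]
    cases hx1c : p.1 ⟨n, hnN⟩ <;> cases hx2c : p.1 ⟨n+1, hn1N⟩
    · -- (F,F)
      rw [show cval false true = -1 from rfl, show cval false false = 0 from rfl]
      obtain ⟨w1, w2, w3, w4⟩ := max3_facts
        ((Finset.range (n+1)).sup' ⟨0, by simp⟩ (dsum (n+2) p))
        (dsum (n+2) p n + -1) (dsum (n+2) p n + -1 + -1)
      obtain ⟨v1, v2, v3, v4⟩ := max3_facts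
        ((Finset.range (n+1)).sup' ⟨0, by simp⟩ (dsum (n+2) p))
        (dsum (n+2) p n + 0) (dsum (n+2) p n + 0 + 0)
      rcases w1 with g | g | g <;> rcases v1 with g2 | g2 | g2 <;> rw [g, g2] <;> omega
    · -- (F,T)
      rw [show cval true true = 0 from rfl, show cval true false = 1 from rfl,
        show cval false true = -1 from rfl, show cval false false = 0 from rfl]
      obtain ⟨w1, w2, w3, w4⟩ := max3_facts
        ((Finset.range (n+1)).sup' ⟨0, by simp⟩ (dsum (n+2) p))
        (dsum (n+2) p n + -1) (dsum (n+2) p n + -1 + 0)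
      obtain ⟨v1, v2, v3, v4⟩ := max3_facts
        ((Finset.range (n+1)).sup' ⟨0, by simp⟩ (dsum (n+2) p))
        (dsum (n+2) p n + 0) (dsum (n+2) p n + 0 + 1)
      rcases w1 with g | g | g <;> rcases v1 with g2 | g2 | g2 <;> rw [g, g2] <;> omega
    · -- (T,F)
      rw [show cval true true = 0 from rfl, show cval true false = 1 from rfl,
        show cval false true = -1 from rfl, show cval false false = 0 from rfl]
      obtain ⟨w1, w2, w3, w4⟩ := max3_facts
        ((Finset.range (n+1)).sup' ⟨0, by simp⟩ (dsum (n+2) p))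
        (dsum (n+2) p n + 0) (dsum (n+2) p n + 0 + -1)
      obtain ⟨v1, v2, v3, v4⟩ := max3_facts
        ((Finset.range (n+1)).sup' ⟨0, by simp⟩ (dsum (n+2) p))
        (dsum (n+2) p n + 1) (dsum (n+2) p n + 1 + 0)
      rcases w1 with g | g | g <;> rcases v1 with g2 | g2 | g2 <;> rw [g, g2] <;> omega
    · -- (T,T) impossible
      exact absurd ⟨hx1c, hx2c⟩ hx
  · -- act on the first factor: x (−,−) → (+,+)
    rcases h1 : fD (n+2) (n+2) p.1 with _ | x'
    · rw [h1] at h; exact absurd h (by simp)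
    rw [h1] at h
    have hq : q = (x', p.2) := by simpa using h.symm
    have he1 : eD (n+2) (n+2) p.1 = none := fD_some_imp_eD_none h1
    have hf2 : fD (n+2) (n+2) p.2 = none := by
      by_contra hf
      exact hc ⟨he1, hf⟩
    rw [fD_last (by omega)] at h1
    simp only [hnormal, hnormal1] at h1
    split_ifs at h1 with hcond
    obtain ⟨hx1, hx2⟩ := hcond
    have hqc2 : q.2 = p.2 := by rw [hq]
    have hqc1 : q.1 = Function.update (Function.update p.1 ⟨n, hnN⟩ true) ⟨n+1, hn1N⟩ true := by
      rw [hq, ← Option.some.inj h1]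
    have hy : ¬(p.2 ⟨n, hnN⟩ = false ∧ p.2 ⟨n+1, hn1N⟩ = false) := by
      intro hcon
      rw [fD_last (by omega)] at hf2
      simp only [hnormal, hnormal1] at hf2
      rw [if_pos hcon] at hf2
      exact nomatch hf2
    have hout : ∀ t, t ≠ n → t ≠ n + 1 → cstep (n+2) q t = cstep (n+2) p t := by
      intro t ht1 ht2
      by_cases htN : t < n + 2
      · rw [cstep_lt htN, cstep_lt htN, hqc1, hqc2, update2_apply]
        rw [if_neg (by intro hcon; exact ht2 (congrArg Fin.val hcon)),
          if_neg (by intro hcon; exact ht1 (congrArg Fin.val hcon))]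
      · rw [cstep, cstep, dif_neg htN, dif_neg htN]
    have hcq1 : cstep (n+2) q n = cval true (p.2 ⟨n, hnN⟩) := by
      rw [cstep_lt hnN, hqc1, hqc2, update2_apply, if_neg hij, if_pos rfl]
    have hcq2 : cstep (n+2) q (n+1) = cval true (p.2 ⟨n+1, hn1N⟩) := by
      rw [cstep_lt hn1N, hqc1, hqc2, update2_apply, if_pos rfl]
    have hcp1 : cstep (n+2) p n = cval false (p.2 ⟨n, hnN⟩) := by
      rw [cstep_lt hnN, hx1]
    have hcp2 : cstep (n+2) p (n+1) = cval false (p.2 ⟨n+1, hn1N⟩) := by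
      rw [cstep_lt hn1N, hx2]
    have hdeq : ∀ i', i' ≤ n → dsum (n+2) q i' = dsum (n+2) p i' := by
      intro i' hi'
      exact dsum_eq_of_lt (fun j hj => (hout j (by omega) (by omega)).symm) |>.symm
    have hAq : (Finset.range (n+1)).sup' ⟨0, by simp⟩ (dsum (n+2) q)
        = (Finset.range (n+1)).sup' ⟨0, by simp⟩ (dsum (n+2) p) :=
      Finset.sup'_congr _ rfl (fun a ha => hdeq a (by
        simp only [Finset.mem_range] at ha; omega))
    have hr : dsum (n+2) p n ≤ (Finset.range (n+1)).sup' ⟨0, by simp⟩ (dsum (n+2) p) :=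
      Finset.le_sup' (dsum (n+2) p) (Finset.mem_range.mpr (by omega))
    have hdq0 : dsum (n+2) q n = dsum (n+2) p n := hdeq n le_rfl
    have Ep1 : dsum (n+2) p (n+1) = dsum (n+2) p n + cval false (p.2 ⟨n, hnN⟩) := by
      rw [dsum_succ, hcp1]
    have Ep2 : dsum (n+2) p (n+2) = dsum (n+2) p (n+1) + cval false (p.2 ⟨n+1, hn1N⟩) := by
      rw [dsum_succ, hcp2]
    have Eq1 : dsum (n+2) q (n+1) = dsum (n+2) p n + cval true (p.2 ⟨n, hnN⟩) := by
      rw [dsum_succ, hcq1, hdq0]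
    have Eq2 : dsum (n+2) q (n+2) = dsum (n+2) q (n+1) + cval true (p.2 ⟨n+1, hn1N⟩) := by
      rw [dsum_succ, hcq2]
    rw [Ival, Ival, msup_split rfl, msup_split rfl, hAq, Eq2, Eq1, Ep2, Ep1]
    cases hy1c : p.2 ⟨n, hnN⟩ <;> cases hy2c : p.2 ⟨n+1, hn1N⟩
    · -- (F,F) impossible
      exact absurd ⟨hy1c, hy2c⟩ hy
    · -- (F,T)
      rw [show cval true false = 1 from rfl, show cval true true = 0 from rfl,
        show cval false false = 0 from rfl, show cval false true = -1 from rfl]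
      obtain ⟨w1, w2, w3, w4⟩ := max3_facts
        ((Finset.range (n+1)).sup' ⟨0, by simp⟩ (dsum (n+2) p))
        (dsum (n+2) p n + 1) (dsum (n+2) p n + 1 + 0)
      obtain ⟨v1, v2, v3, v4⟩ := max3_facts
        ((Finset.range (n+1)).sup' ⟨0, by simp⟩ (dsum (n+2) p))
        (dsum (n+2) p n + 0) (dsum (n+2) p n + 0 + -1)
      rcases w1 with g | g | g <;> rcases v1 with g2 | g2 | g2 <;> rw [g, g2] <;> omega
    · -- (T,F)
      rw [show cval true false = 1 from rfl, show cval true true = 0 from rfl,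
        show cval false false = 0 from rfl, show cval false true = -1 from rfl]
      obtain ⟨w1, w2, w3, w4⟩ := max3_facts
        ((Finset.range (n+1)).sup' ⟨0, by simp⟩ (dsum (n+2) p))
        (dsum (n+2) p n + 0) (dsum (n+2) p n + 0 + 1)
      obtain ⟨v1, v2, v3, v4⟩ := max3_facts
        ((Finset.range (n+1)).sup' ⟨0, by simp⟩ (dsum (n+2) p))
        (dsum (n+2) p n + -1) (dsum (n+2) p n + -1 + 0)
      rcases w1 with g | g | g <;> rcases v1 with g2 | g2 | g2 <;> rw [g, g2] <;> omega
    · -- (T,T)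
      rw [show cval true true = 0 from rfl, show cval false true = -1 from rfl]
      obtain ⟨w1, w2, w3, w4⟩ := max3_facts
        ((Finset.range (n+1)).sup' ⟨0, by simp⟩ (dsum (n+2) p))
        (dsum (n+2) p n + -1) (dsum (n+2) p n + -1 + -1)
      obtain ⟨v1, v2, v3, v4⟩ := max3_facts
        ((Finset.range (n+1)).sup' ⟨0, by simp⟩ (dsum (n+2) p))
        (dsum (n+2) p n + 0) (dsum (n+2) p n + 0 + 0)
      rcases w1 with g | g | g <;> rcases v1 with g2 | g2 | g2 <;> rw [g, g2] <;> omega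

end InvarianceLast
section GlobalInvariance

lemma Ival_tfD {N l : ℕ} {p q : Seq N × Seq N} (h : tfD N l p = some q) :
    Ival N q = Ival N p := by
  obtain ⟨hl, hN⟩ := tfD_some_range h
  rcases Nat.lt_or_ge l N with hlt | hge
  · obtain ⟨m, rfl⟩ : ∃ m, l = m + 1 := ⟨l - 1, by omega⟩
    exact Ival_tfD_mid (by omega) h
  · have hlN : l = N := by omega
    rw [hlN] at h
    have hN2 : 2 ≤ N := by
      by_contra hcon
      rw [tfD_eq] at h
      simp only [fD_none_out (N := N) (l := N) (Or.inr ⟨rfl, by omega⟩)] at h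
      split_ifs at h <;> simp at h
    obtain ⟨n, rfl⟩ : ∃ n, N = n + 2 := ⟨N - 2, by omega⟩
    exact Ival_tfD_last h

lemma Ival_teD {N l : ℕ} {p q : Seq N × Seq N} (h : teD N l p = some q) :
    Ival N q = Ival N p :=
  (Ival_tfD (teD_tfD h)).symm

lemma Ival_connD {N : ℕ} {p q : Seq N × Seq N} (h : ConnD N p q) :
    Ival N p = Ival N q := by
  induction h with
  | rel a b hab =>
      obtain ⟨l, _, _, hab⟩ := hab
      rcases hab with h' | h'
      · exact (Ival_teD h').symm
      · exact (Ival_tfD h').symm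
  | refl a => rfl
  | symm a b _ ih => exact ih.symm
  | trans a b c _ _ ih1 ih2 => exact ih1.trans ih2

lemma dsum_top_low {N k : ℕ} (hk : k ≤ N) :
    ∀ i, i ≤ N → dsum N (top N, lowSeq N k) i = max 0 ((i:ℤ) - k) := by
  intro i
  induction i with
  | zero =>
      intro _
      rw [dsum_zero]
      rw [eq_comm, Nat.cast_zero, zero_sub, max_eq_left (by omega)]
  | succ i ih =>
      intro hi1
      rw [dsum_succ, ih (by omega), cstep_lt (show i < N by omega)]
      have htop : (top N, lowSeq N k).1 ⟨i, show i < N by omega⟩ = true := rfl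
      have hlow : (top N, lowSeq N k).2 ⟨i, show i < N by omega⟩ = decide (i < k) := rfl
      rw [htop, hlow]
      by_cases hik : i < k
      · rw [decide_eq_true hik, show cval true true = 0 from rfl]
        rw [max_eq_left (by omega), max_eq_left (by push_cast; omega)]
        ring
      · rw [decide_eq_false hik, show cval true false = 1 from rfl]
        rw [max_eq_right (by omega), max_eq_right (by push_cast; omega)]
        push_cast
        ring
  
lemma Ival_top_low {N k : ℕ} (hk : k ≤ N) :
    Ival N (top N, lowSeq N k) = (N : ℤ) - k := by
  have hms : msup N (top N, lowSeq N k) = (N : ℤ) - k := by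
    apply le_antisymm
    · apply msup_le
      intro i hi
      rw [dsum_top_low hk i hi]
      apply max_le (by omega)
      have : (i : ℤ) ≤ N := by exact_mod_cast hi
      omega
    · have := le_msup (p := (top N, lowSeq N k)) (le_refl N)
      rwa [dsum_top_low hk N le_rfl, max_eq_right (by omega)] at this
  rw [Ival, hms, dsum_top_low hk N le_rfl, max_eq_right (by omega)]
  omega

end GlobalInvariance
section Lowest

variable {N : ℕ}

lemma monoFalse (b : Seq N) (hf : ∀ l, 1 ≤ l → l + 1 ≤ N → fD N l b = none) :
    ∀ d t, ∀ h : t + d < N, b ⟨t, by omega⟩ = false → b ⟨t + d, h⟩ = false := by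
  intro d
  induction d with
  | zero => intro t h hb; exact hb
  | succ d ih =>
      intro t h hb
      have hprev : b ⟨t + d, by omega⟩ = false := ih t (by omega) hb
      have hmid := hf (t + d + 1) (by omega) (by omega)
      rw [fD_mid (by omega) (by omega)] at hmid
      simp only [Nat.add_sub_cancel] at hmid
      cases hcase : b ⟨t + d + 1, h⟩
      · rfl
      · rw [if_pos ⟨hprev, hcase⟩] at hmid
        exact absurd hmid (by simp)

lemma monoFalse' (b : Seq N) (hf : ∀ l, 1 ≤ l → l + 1 ≤ N → fD N l b = none)
    {s t : ℕ} (hst : s ≤ t) (ht : t < N) (hb : b ⟨s, by omega⟩ = false) :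
    b ⟨t, ht⟩ = false := by
  obtain ⟨d, rfl⟩ : ∃ d, t = s + d := ⟨t - s, by omega⟩
  exact monoFalse b hf d s ht hb

lemma eq_top (hN : 2 ≤ N) (b : Seq N) (hb : BspPlus N b)
    (hf : ∀ l, 1 ≤ l → l ≤ N → fD N l b = none) : b = top N := by
  have hf' : ∀ l, 1 ≤ l → l + 1 ≤ N → fD N l b = none := fun l h1 h2 => hf l h1 (by omega)
  by_contra hne
  have hex : ∃ i : Fin N, b i = false := by
    by_contra hno
    push_neg at hno
    apply hne
    funext i
    cases hcase : b i
    · exact absurd hcase (hno i)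
    · rfl
  obtain ⟨i0, hi0⟩ := hex
  have hi0' : b ⟨i0.val, i0.isLt⟩ = false := by rw [Fin.eta]; exact hi0
  have hlast : b ⟨N-1, by omega⟩ = false :=
    monoFalse' b hf' (by omega) (by omega) hi0'
  have honly : ∀ i : Fin N, b i = false → i.val = N - 1 := by
    intro i hi
    by_contra hlt
    have hi' : b ⟨i.val, i.isLt⟩ = false := by rw [Fin.eta]; exact hi
    have h2 : b ⟨N-2, by omega⟩ = false :=
      monoFalse' b hf' (by omega) (by omega) hi'
    have hNf := hf N (by omega) le_rfl
    rw [fD_last hN, if_pos ⟨h2, hlast⟩] at hNf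
    exact absurd hNf (by simp)
  have hset : Finset.univ.filter (fun i => b i = false) = {(⟨N-1, by omega⟩ : Fin N)} := by
    ext i
    simp only [Finset.mem_filter, Finset.mem_univ, true_and, Finset.mem_singleton]
    constructor
    · intro hi
      exact Fin.ext (honly i hi)
    · intro hi
      rw [hi]
      exact hlast
  have hmc : minusCount N b = 1 := by
    rw [minusCount, hset, Finset.card_singleton]
  rw [BspPlus, hmc] at hb
  norm_num at hb

lemma minusCount_le (b : Seq N) : minusCount N b ≤ N := by
  rw [minusCount]
  calc (Finset.univ.filter (fun i => b i = false)).card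
      ≤ Finset.univ.card := Finset.card_filter_le _ _
    _ = N := by simp

lemma eq_lowSeq (b : Seq N)
    (hf : ∀ l, 1 ≤ l → l + 1 ≤ N → fD N l b = none) :
    b = lowSeq N (N - minusCount N b) := by
  have hmcN : minusCount N b ≤ N := minusCount_le b
  have claim : ∀ i : Fin N, b i = false ↔ N - minusCount N b ≤ i.val := by
    intro i
    constructor
    · intro hi
      have hsub : Finset.Ici i ⊆ Finset.univ.filter (fun j => b j = false) := by
        intro j hj
        rw [Finset.mem_Ici] at hj
        simp only [Finset.mem_filter, Finset.mem_univ, true_and]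
        have hi' : b ⟨i.val, i.isLt⟩ = false := by rw [Fin.eta]; exact hi
        have := monoFalse' b hf (s := i.val) (t := j.val) hj j.isLt hi'
        rwa [Fin.eta] at this
      have hcard := Finset.card_le_card hsub
      rw [Fin.card_Ici] at hcard
      rw [← minusCount] at hcard
      omega
    · intro hge
      cases hcase : b i
      · rfl
      · exfalso
        have hsub : Finset.univ.filter (fun j => b j = false) ⊆ Finset.Ioi i := by
          intro j hj
          simp only [Finset.mem_filter, Finset.mem_univ, true_and] at hj
          rw [Finset.mem_Ioi]
          by_contra hle
          push_neg at hle
          have hj' : b ⟨j.val, j.isLt⟩ = false := by rw [Fin.eta]; exact hj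
          have := monoFalse' b hf (s := j.val) (t := i.val) hle i.isLt hj'
          rw [Fin.eta] at this
          rw [this] at hcase
          exact Bool.noConfusion hcase
        have hcard := Finset.card_le_card hsub
        rw [Fin.card_Ioi] at hcard
        rw [← minusCount] at hcard
        have := i.isLt
        omega
  funext i
  show b i = decide (i.val < N - minusCount N b)
  cases hcase : b i
  · have h1 := (claim i).mp hcase
    symm
    simp only [decide_eq_false_iff_not]
    omega
  · have h1 : ¬ (N - minusCount N b ≤ i.val) := by
      intro hcon
      rw [(claim i).mpr hcon] at hcase
      exact Bool.noConfusion hcase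
    symm
    simp only [decide_eq_true_eq]
    omega

lemma lowest_char (hN : 2 ≤ N) (x y : Seq N) (hx : BspPlus N x) (hy : BspPlus N y) :
    (∀ l, 1 ≤ l → l ≤ N → tfD N l (x, y) = none) ↔
      (x = top N ∧ ∃ k, k ≤ N ∧ k % 2 = N % 2 ∧ y = lowSeq N k) := by
  constructor
  · intro h
    have hfx : ∀ l, 1 ≤ l → l ≤ N → fD N l x = none := by
      intro l h1 h2
      have ht := h l h1 h2
      rw [tfD_eq] at ht
      split_ifs at ht with hc
      · rcases h2' : fD N l (x,y).2 with _ | y'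
        · exact absurd h2' hc.2
        · rw [h2'] at ht; exact absurd ht (by simp)
      · rcases h1' : fD N l (x,y).1 with _ | x'
        · rfl
        · rw [h1'] at ht; exact absurd ht (by simp)
    have hxy : ∀ l, 1 ≤ l → l ≤ N → eD N l x = none → fD N l y = none := by
      intro l h1 h2 he
      have ht := h l h1 h2
      rw [tfD_eq] at ht
      split_ifs at ht with hc
      · rcases h2' : fD N l (x,y).2 with _ | y'
        · rfl
        · rw [h2'] at ht; exact absurd ht (by simp)
      · by_contra hfy
        exact hc ⟨he, hfy⟩
    have hxt : x = top N := eq_top hN x hx hfx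
    have hfy : ∀ l, 1 ≤ l → l + 1 ≤ N → fD N l y = none := by
      intro l h1 h2
      apply hxy l h1 (by omega)
      rw [hxt, eD_mid h1 h2]
      apply if_neg
      rintro ⟨-, hb⟩
      exact Bool.noConfusion hb
    have hmcN : minusCount N y ≤ N := minusCount_le y
    refine ⟨hxt, N - minusCount N y, by omega, ?_, eq_lowSeq y hfy⟩
    obtain ⟨c, hc⟩ := hy
    omega
  · rintro ⟨hxt, k, hk1, hk2, hyl⟩
    subst hxt
    subst hyl
    intro l h1 h2
    rw [tfD_eq]
    rcases Nat.lt_or_ge l N with hlt | hge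
    · have hfyl : fD N l (lowSeq N k) = none := by
        rw [fD_mid h1 hlt]
        apply if_neg
        rintro ⟨ha, hb⟩
        simp only [lowSeq, decide_eq_false_iff_not, decide_eq_true_eq] at ha hb
        omega
      have hftop : fD N l (top N) = none := by
        rw [fD_mid h1 hlt]
        apply if_neg
        rintro ⟨ha, -⟩
        exact Bool.noConfusion ha
      rw [if_neg (by rintro ⟨-, hcc⟩; exact hcc hfyl)]
      show (fD N l (top N)).map _ = none
      rw [hftop]
      rfl
    · have hlN : l = N := by omega
      rw [hlN]
      have hetop : eD N N (top N) ≠ none := by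
        rw [eD_last hN, if_pos ⟨rfl, rfl⟩]
        simp
      rw [if_neg (by rintro ⟨hcc, -⟩; exact hetop hcc)]
      have hftop : fD N N (top N) = none := by
        rw [fD_last hN]
        apply if_neg
        rintro ⟨ha, -⟩
        exact Bool.noConfusion ha
      show (fD N N (top N)).map _ = none
      rw [hftop]
      rfl

end Lowest
section Measure

variable {N l : ℕ} {b c : Seq N}

lemma sum_two_point (F G : Fin N → ℕ) {i j : Fin N} (hij : i ≠ j)
    (h : ∀ t, t ≠ i → t ≠ j → F t = G t) :
    (∑ t, F t) + (G i + G j) = (∑ t, G t) + (F i + F j) := by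
  have hmemj : j ∈ Finset.univ.erase i :=
    Finset.mem_erase.mpr ⟨hij.symm, Finset.mem_univ j⟩
  have e1 : ∑ t, F t = F i + ∑ t ∈ Finset.univ.erase i, F t :=
    (Finset.add_sum_erase _ F (Finset.mem_univ i)).symm
  have e2 : ∑ t ∈ Finset.univ.erase i, F t
      = F j + ∑ t ∈ (Finset.univ.erase i).erase j, F t :=
    (Finset.add_sum_erase _ F hmemj).symm
  have e3 : ∑ t, G t = G i + ∑ t ∈ Finset.univ.erase i, G t :=
    (Finset.add_sum_erase _ G (Finset.mem_univ i)).symm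
  have e4 : ∑ t ∈ Finset.univ.erase i, G t
      = G j + ∑ t ∈ (Finset.univ.erase i).erase j, G t :=
    (Finset.add_sum_erase _ G hmemj).symm
  have e5 : ∑ t ∈ (Finset.univ.erase i).erase j, F t
      = ∑ t ∈ (Finset.univ.erase i).erase j, G t := by
    apply Finset.sum_congr rfl
    intro t ht
    rw [Finset.mem_erase, Finset.mem_erase] at ht
    exact h t ht.2.1 ht.1
  omega

lemma minusCount_mod_fD (h : fD N l b = some c) :
    minusCount N c % 2 = minusCount N b % 2 := by
  obtain ⟨hl, hlN⟩ := fD_some_range h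
  have hmc : ∀ d : Seq N, minusCount N d = ∑ t, (if d t = false then 1 else 0) := by
    intro d; rw [minusCount, Finset.card_filter]
  rcases Nat.lt_or_ge l N with hlt | hge
  · obtain ⟨m, rfl⟩ : ∃ m, l = m + 1 := ⟨l - 1, by omega⟩
    have hmN : m < N := by omega
    have hm1N : m + 1 < N := by omega
    have hij : (⟨m, hmN⟩ : Fin N) ≠ ⟨m+1, hm1N⟩ := by
      intro hcon; exact absurd (congrArg Fin.val hcon) (by simp)
    rw [fD_mid hl hlt] at h
    simp only [Nat.add_sub_cancel] at h
    split_ifs at h with hcond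
    obtain ⟨hb1, hb2⟩ := hcond
    have hcd : c = Function.update (Function.update b ⟨m, hmN⟩ true) ⟨m+1, hm1N⟩ false :=
      (Option.some.inj h).symm
    have hoff : ∀ t : Fin N, t ≠ ⟨m, hmN⟩ → t ≠ ⟨m+1, hm1N⟩ →
        (if c t = false then 1 else 0) = (if b t = false then 1 else 0) := by
      intro t ht1 ht2
      rw [hcd, update2_apply, if_neg ht2, if_neg ht1]
    have hkey := sum_two_point (fun t => if c t = false then 1 else 0)
      (fun t => if b t = false then 1 else 0) hij hoff
    have hc1 : c ⟨m, hmN⟩ = true := by rw [hcd, update2_apply, if_neg hij, if_pos rfl]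
    have hc2 : c ⟨m+1, hm1N⟩ = false := by rw [hcd, update2_apply, if_pos rfl]
    simp only [hc1, hc2, hb1, hb2] at hkey
    norm_num at hkey
    rw [minusCount, minusCount]
    omega
  · have hlN' : l = N := by omega
    have hN2 : 2 ≤ N := by
      by_contra hcon
      rw [fD_none_out (Or.inr ⟨hlN', by omega⟩)] at h
      exact nomatch h
    have hnN : N - 2 < N := by omega
    have hn1N : N - 1 < N := by omega
    have hij : (⟨N-2, hnN⟩ : Fin N) ≠ ⟨N-1, hn1N⟩ := by
      intro hcon
      have := congrArg Fin.val hcon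
      simp only [] at this
      omega
    rw [hlN', fD_last hN2] at h
    split_ifs at h with hcond
    obtain ⟨hb1, hb2⟩ := hcond
    have hcd : c = Function.update (Function.update b ⟨N-2, hnN⟩ true) ⟨N-1, hn1N⟩ true :=
      (Option.some.inj h).symm
    have hoff : ∀ t : Fin N, t ≠ ⟨N-2, hnN⟩ → t ≠ ⟨N-1, hn1N⟩ →
        (if c t = false then 1 else 0) = (if b t = false then 1 else 0) := by
      intro t ht1 ht2
      rw [hcd, update2_apply, if_neg ht2, if_neg ht1]
    have hkey := sum_two_point (fun t => if c t = false then 1 else 0)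
      (fun t => if b t = false then 1 else 0) hij hoff
    have hc1 : c ⟨N-2, hnN⟩ = true := by rw [hcd, update2_apply, if_neg hij, if_pos rfl]
    have hc2 : c ⟨N-1, hn1N⟩ = true := by rw [hcd, update2_apply, if_pos rfl]
    simp only [hc1, hc2, hb1, hb2] at hkey
    norm_num at hkey
    rw [minusCount, minusCount]
    omega

lemma BspPlus_tfD {p q : Seq N × Seq N} (h : tfD N l p = some q) :
    (BspPlus N p.1 → BspPlus N q.1) ∧ (BspPlus N p.2 → BspPlus N q.2) := by
  rw [tfD_eq] at h
  split_ifs at h with hc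
  · rcases h2 : fD N l p.2 with _ | y'
    · rw [h2] at h; exact absurd h (by simp)
    rw [h2] at h
    have hq : q = (p.1, y') := by simpa using h.symm
    constructor
    · intro hb; rw [hq]; exact hb
    · intro hb
      rw [hq]
      show BspPlus N y'
      rw [BspPlus, Nat.even_iff] at hb ⊢
      rw [minusCount_mod_fD h2]
      exact hb
  · rcases h1 : fD N l p.1 with _ | x'
    · rw [h1] at h; exact absurd h (by simp)
    rw [h1] at h
    have hq : q = (x', p.2) := by simpa using h.symm
    constructor
    · intro hb
      rw [hq]
      show BspPlus N x'
      rw [BspPlus, Nat.even_iff] at hb ⊢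
      rw [minusCount_mod_fD h1]
      exact hb
    · intro hb; rw [hq]; exact hb

/-- The decreasing weight. -/
def wgt (N : ℕ) (b : Seq N) : ℕ := ∑ i : Fin N, (if b i = true then 0 else N - i.val)

lemma wgt_fD (h : fD N l b = some c) : wgt N c < wgt N b := by
  obtain ⟨hl, hlN⟩ := fD_some_range h
  rcases Nat.lt_or_ge l N with hlt | hge
  · obtain ⟨m, rfl⟩ : ∃ m, l = m + 1 := ⟨l - 1, by omega⟩
    have hmN : m < N := by omega
    have hm1N : m + 1 < N := by omega
    have hij : (⟨m, hmN⟩ : Fin N) ≠ ⟨m+1, hm1N⟩ := by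
      intro hcon; exact absurd (congrArg Fin.val hcon) (by simp)
    rw [fD_mid hl hlt] at h
    simp only [Nat.add_sub_cancel] at h
    split_ifs at h with hcond
    obtain ⟨hb1, hb2⟩ := hcond
    have hcd : c = Function.update (Function.update b ⟨m, hmN⟩ true) ⟨m+1, hm1N⟩ false :=
      (Option.some.inj h).symm
    have hoff : ∀ t : Fin N, t ≠ ⟨m, hmN⟩ → t ≠ ⟨m+1, hm1N⟩ →
        (if c t = true then 0 else N - t.val) = (if b t = true then 0 else N - t.val) := by
      intro t ht1 ht2
      rw [hcd, update2_apply, if_neg ht2, if_neg ht1]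
    have hkey := sum_two_point (fun t => if c t = true then 0 else N - t.val)
      (fun t => if b t = true then 0 else N - t.val) hij hoff
    have hc1 : c ⟨m, hmN⟩ = true := by rw [hcd, update2_apply, if_neg hij, if_pos rfl]
    have hc2 : c ⟨m+1, hm1N⟩ = false := by rw [hcd, update2_apply, if_pos rfl]
    rw [wgt, wgt]
    simp only [hc1, hc2, hb1, hb2] at hkey
    norm_num at hkey
    omega
  · have hlN' : l = N := by omega
    have hN2 : 2 ≤ N := by
      by_contra hcon
      rw [fD_none_out (Or.inr ⟨hlN', by omega⟩)] at h
      exact nomatch h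
    have hnN : N - 2 < N := by omega
    have hn1N : N - 1 < N := by omega
    have hij : (⟨N-2, hnN⟩ : Fin N) ≠ ⟨N-1, hn1N⟩ := by
      intro hcon
      have := congrArg Fin.val hcon
      simp only [] at this
      omega
    rw [hlN', fD_last hN2] at h
    split_ifs at h with hcond
    obtain ⟨hb1, hb2⟩ := hcond
    have hcd : c = Function.update (Function.update b ⟨N-2, hnN⟩ true) ⟨N-1, hn1N⟩ true :=
      (Option.some.inj h).symm
    have hoff : ∀ t : Fin N, t ≠ ⟨N-2, hnN⟩ → t ≠ ⟨N-1, hn1N⟩ →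
        (if c t = true then 0 else N - t.val) = (if b t = true then 0 else N - t.val) := by
      intro t ht1 ht2
      rw [hcd, update2_apply, if_neg ht2, if_neg ht1]
    have hkey := sum_two_point (fun t => if c t = true then 0 else N - t.val)
      (fun t => if b t = true then 0 else N - t.val) hij hoff
    have hc1 : c ⟨N-2, hnN⟩ = true := by rw [hcd, update2_apply, if_neg hij, if_pos rfl]
    have hc2 : c ⟨N-1, hn1N⟩ = true := by rw [hcd, update2_apply, if_pos rfl]
    rw [wgt, wgt]
    simp only [hc1, hc2, hb1, hb2] at hkey
    norm_num at hkey
    omega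

lemma wgt_tfD {p q : Seq N × Seq N} (h : tfD N l p = some q) :
    wgt N q.1 + wgt N q.2 < wgt N p.1 + wgt N p.2 := by
  rw [tfD_eq] at h
  split_ifs at h with hc
  · rcases h2 : fD N l p.2 with _ | y'
    · rw [h2] at h; exact absurd h (by simp)
    rw [h2] at h
    have hq : q = (p.1, y') := by simpa using h.symm
    rw [hq]
    have := wgt_fD h2
    simp only []
    omega
  · rcases h1 : fD N l p.1 with _ | x'
    · rw [h1] at h; exact absurd h (by simp)
    rw [h1] at h
    have hq : q = (x', p.2) := by simpa using h.symm
    rw [hq]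
    have := wgt_fD h1
    simp only []
    omega

lemma exists_conn (hN : 2 ≤ N) :
    ∀ W (p : Seq N × Seq N), BspPlus N p.1 → BspPlus N p.2 →
      wgt N p.1 + wgt N p.2 ≤ W →
      ∃ k, k ≤ N ∧ k % 2 = N % 2 ∧ ConnD N p (top N, lowSeq N k) := by
  intro W
  induction W using Nat.strong_induction_on with
  | _ W ih =>
    intro p h1 h2 h3
    by_cases hall : ∀ l, 1 ≤ l → l ≤ N → tfD N l p = none
    · obtain ⟨hx, k, hk1, hk2, hy⟩ := (lowest_char hN p.1 p.2 h1 h2).mp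
        (fun l a b => hall l a b)
      refine ⟨k, hk1, hk2, ?_⟩
      have hp : p = (top N, lowSeq N k) := by
        rw [show p = (p.1, p.2) from rfl, hx, hy]
      rw [hp]
      exact Relation.EqvGen.refl _
    · push_neg at hall
      obtain ⟨l, hl1, hl2, hlsome⟩ := hall
      rcases hq : tfD N l p with _ | q
      · exact absurd hq hlsome
      have hb := BspPlus_tfD hq
      have hw := wgt_tfD hq
      obtain ⟨k, hk1, hk2, hconn⟩ := ih (wgt N q.1 + wgt N q.2) (by omega) q
        (hb.1 h1) (hb.2 h2) le_rfl
      exact ⟨k, hk1, hk2, Relation.EqvGen.trans _ _ _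
        (Relation.EqvGen.rel _ _ ⟨l, hl1, hl2, Or.inr hq⟩) hconn⟩

end Measure

/-- Decomposition of `B_sp^+ ⊗ B_sp^+` (type `D_N`, `N ≥ 2`):
every element lies in the connected component of exactly one of the elements
`(+,…,+) ⊗ (+^k, −^{N−k})` with `0 ≤ k ≤ N`, `k ≡ N (mod 2)`, and these elements are
precisely the elements killed by all tensor-product operators `f̃_l`, `1 ≤ l ≤ N`. -/
theorem BspPlus_tensor_BspPlus_decomposition (N : ℕ) (hN : 2 ≤ N) :
    (∀ u v : Seq N, BspPlus N u → BspPlus N v →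
      ∃! k, k ≤ N ∧ k % 2 = N % 2 ∧ ConnD N (u, v) (top N, lowSeq N k)) ∧
    (∀ x y : Seq N, BspPlus N x → BspPlus N y →
      ((∀ l, 1 ≤ l → l ≤ N → tfD N l (x, y) = none) ↔
        (x = top N ∧ ∃ k, k ≤ N ∧ k % 2 = N % 2 ∧ y = lowSeq N k))) := by
  constructor
  · intro u v hu hv
    obtain ⟨k, hk1, hk2, hconn⟩ :=
      exists_conn hN (wgt N u + wgt N v) (u, v) hu hv le_rfl
    refine ⟨k, ⟨hk1, hk2, hconn⟩, ?_⟩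
    rintro k' ⟨hk1', hk2', hconn'⟩
    have h1 := Ival_connD hconn
    have h2 := Ival_connD hconn'
    rw [Ival_top_low hk1] at h1
    rw [Ival_top_low hk1'] at h2
    have h3 : (N:ℤ) - k' = (N:ℤ) - k := by rw [← h1, ← h2]
    omega
  · intro x y hx hy
    exact lowest_char hN x y hx hy


end CrystalPaper
end
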